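/- arXiv:0801.3529 — 10 statements merged into one kernel-verified Lean document; each statement's English description precedes it below -/
import Mathlib

section
/- Let H be a complex Hilbert space and let U, V : ℝ → U(H) be strongly continuous one-parameter groups of unitary operators on H. Suppose there is a real number λ ≠ 0 such that U(t) V(s) U(t)⁻¹ = V(e^{λt} s) for all s, t ∈ ℝ. If φ ∈ H satisfies U(t)φ = φ for all t ∈ ℝ, then V(s)φ = φ for all s ∈ ℝ. -/
/-- Lemma 1(b), group level: let `U, V` be strongly continuous one-parameter unitary
groups on a complex Hilbert space `H` such that `U(t) V(s) U(t)⁻¹ = V(e^{λt} s)` for some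
real `λ ≠ 0`. If `φ` is invariant under every `U(t)`, then `φ` is invariant under every
`V(s)`. -/
theorem invariant_of_scaling_action
    {H : Type*} [NormedAddCommGroup H] [InnerProductSpace ℂ H] [CompleteSpace H]
    (U V : ℝ → (H →L[ℂ] H))
    (hUu : ∀ t, U t ∈ unitary (H →L[ℂ] H)) (hVu : ∀ s, V s ∈ unitary (H →L[ℂ] H))
    (hU0 : U 0 = 1) (hUadd : ∀ t₁ t₂, U (t₁ + t₂) = U t₁ * U t₂)
    (hV0 : V 0 = 1) (hVadd : ∀ s₁ s₂, V (s₁ + s₂) = V s₁ * V s₂)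
    (hUcont : ∀ ψ : H, Continuous fun t => U t ψ)
    (hVcont : ∀ ψ : H, Continuous fun s => V s ψ)
    (l : ℝ) (hl : l ≠ 0)
    (hcomm : ∀ t s : ℝ, U t * V s * U (-t) = V (Real.exp (l * t) * s))
    (φ : H) (hφ : ∀ t : ℝ, U t φ = φ) :
    ∀ s : ℝ, V s φ = φ := by
  intro s
  -- key identity: V (exp (l t) s) φ = U t (V s φ)
  have key : ∀ t : ℝ, V (Real.exp (l * t) * s) φ = U t (V s φ) := by
    intro t
    have h := congrArg (fun (W : H →L[ℂ] H) => W φ) (hcomm t s)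
    simp only [ContinuousLinearMap.mul_apply] at h
    rw [hφ (-t)] at h
    exact h.symm
  -- norm invariance: ‖V s φ - φ‖ = ‖V (exp (l t) s) φ - φ‖ for all t
  have hconst : ∀ t : ℝ, ‖V (Real.exp (l * t) * s) φ - φ‖ = ‖V s φ - φ‖ := by
    intro t
    rw [key t]
    calc ‖U t (V s φ) - φ‖ = ‖U t (V s φ) - U t φ‖ := by rw [hφ t]
    _ = ‖U t (V s φ - φ)‖ := by rw [map_sub]
    _ = ‖V s φ - φ‖ := ContinuousLinearMap.norm_map_of_mem_unitary (hUu t) _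
  -- take t_n = -n / l, so exp (l t_n) = exp (-n) → 0
  have htend : Filter.Tendsto (fun n : ℕ => Real.exp (l * (-(n : ℝ) / l)) * s)
      Filter.atTop (nhds 0) := by
    have h1 : ∀ n : ℕ, Real.exp (l * (-(n : ℝ) / l)) * s = Real.exp (-(n : ℝ)) * s := by
      intro n
      congr 2
      field_simp
    simp only [h1]
    have : Filter.Tendsto (fun n : ℕ => Real.exp (-(n : ℝ))) Filter.atTop (nhds 0) :=
      Real.tendsto_exp_atBot.comp
        (Filter.tendsto_neg_atBot_iff.mpr tendsto_natCast_atTop_atTop)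
    simpa using this.mul_const s
  have hcont : Continuous fun x : ℝ => ‖V x φ - φ‖ :=
    ((hVcont φ).sub continuous_const).norm
  have hlim : Filter.Tendsto (fun n : ℕ => ‖V (Real.exp (l * (-(n : ℝ) / l)) * s) φ - φ‖)
      Filter.atTop (nhds ‖V (0 : ℝ) φ - φ‖) :=
    (hcont.tendsto 0).comp htend
  have h0 : ‖V (0 : ℝ) φ - φ‖ = 0 := by
    rw [hV0]; simp
  rw [h0] at hlim
  have : (fun n : ℕ => ‖V (Real.exp (l * (-(n : ℝ) / l)) * s) φ - φ‖)
      = fun _ : ℕ => ‖V s φ - φ‖ := funext fun n => hconst _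
  rw [this] at hlim
  have := tendsto_nhds_unique hlim tendsto_const_nhds
  have : ‖V s φ - φ‖ = 0 := this.symm
  exact sub_eq_zero.mp (norm_eq_zero.mp this)
end

section
/- Let H be a complex Hilbert space and let M, N be bounded skew-adjoint operators on H with [M,N] = MN − NM = λN for some real λ ≠ 0. If φ ∈ H satisfies exp(tM)φ = φ for all t ∈ ℝ, then exp(sN)φ = φ for all s ∈ ℝ. -/
/-!
Differentiating `t ↦ exp(tM)φ = φ` at `0` gives `Mφ = 0`, so applying `[M,N] = λN` to `φ` yields
`M(Nφ) = λ Nφ`. A skew-adjoint operator has no nonzero real eigenvalue, since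
`⟪Mv, v⟫ = -⟪v, Mv⟫` forces `λ‖v‖² = -λ‖v‖²`; hence `Nφ = 0`, and then `s ↦ exp(sN)φ` has
zero derivative everywhere, so it is constantly `φ`.
-/

open NormedSpace ContinuousLinearMap

section Exp

variable {E : Type*} [NormedAddCommGroup E] [NormedSpace ℂ E] [CompleteSpace E]

theorem hasDerivAt_exp_ofReal_smul_apply (A : E →L[ℂ] E) (x : E) (t : ℝ) :
    HasDerivAt (fun s : ℝ => exp ((s : ℂ) • A) x) (exp ((t : ℂ) • A) (A x)) t := by
  have h := ((apply ℂ E x).hasFDerivAt.comp_hasDerivAt _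
    (hasDerivAt_exp_smul_const A (t : ℂ))).scomp (𝕜 := ℝ) t Complex.ofRealCLM.hasDerivAt
  simpa [Function.comp_def] using h

theorem apply_eq_zero_of_forall_exp_smul_apply_eq (A : E →L[ℂ] E) {x : E}
    (hx : ∀ t : ℝ, exp ((t : ℂ) • A) x = x) : A x = 0 := by
  have h := hasDerivAt_exp_ofReal_smul_apply A x 0
  simp only [hx, Complex.ofReal_zero, zero_smul, exp_zero] at h
  exact h.unique (hasDerivAt_const 0 x)

theorem exp_smul_apply_eq_self_of_apply_eq_zero {A : E →L[ℂ] E} {x : E} (hx : A x = 0)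
    (s : ℝ) : exp ((s : ℂ) • A) x = x := by
  have h (t : ℝ) : HasDerivAt (fun s : ℝ => exp ((s : ℂ) • A) x) 0 t := by
    simpa [hx] using hasDerivAt_exp_ofReal_smul_apply A x t
  simpa using
    is_const_of_deriv_eq_zero (fun t => (h t).differentiableAt) (fun t => (h t).deriv) s 0

end Exp

theorem eq_zero_of_apply_eq_ofReal_smul {H : Type*} [NormedAddCommGroup H]
    [InnerProductSpace ℂ H] [CompleteSpace H] {A : H →L[ℂ] H} (hA : adjoint A = -A) {l : ℝ}
    (hl : l ≠ 0) {v : H} (hv : A v = (l : ℂ) • v) : v = 0 := by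
  have h : inner ℂ (A v) v = -inner ℂ v (A v) := by
    rw [← adjoint_inner_right, hA, neg_apply, inner_neg_right]
  rw [hv, inner_smul_left, inner_smul_right, Complex.conj_ofReal, eq_neg_iff_add_eq_zero,
    ← two_mul, mul_eq_zero, mul_eq_zero] at h
  simpa [hl] using h

theorem invariant_of_ad_eigenvector_general
    {H : Type*} [NormedAddCommGroup H] [InnerProductSpace ℂ H] [CompleteSpace H]
    (M N : H →L[ℂ] H) (hM : adjoint M = -M)
    (l : ℝ) (hl : l ≠ 0) (hcomm : M * N - N * M = (l : ℂ) • N)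
    (φ : H) (hφ : ∀ t : ℝ, exp ((t : ℂ) • M) φ = φ) :
    ∀ s : ℝ, exp ((s : ℂ) • N) φ = φ := by
  have hMφ : M φ = 0 := apply_eq_zero_of_forall_exp_smul_apply_eq M hφ
  have hMNφ : M (N φ) = (l : ℂ) • N φ := by
    simpa [hMφ] using congr($hcomm φ)
  exact exp_smul_apply_eq_self_of_apply_eq_zero (eq_zero_of_apply_eq_ofReal_smul hM hl hMNφ)

/-- Lemma 1(b), bounded-operator version: if `M, N` are bounded skew-adjoint operators
with `[M,N] = λN` for a real `λ ≠ 0`, and `φ` is invariant under `exp(tM)` for all real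
`t`, then `φ` is invariant under `exp(sN)` for all real `s`. -/
theorem invariant_of_ad_eigenvector
    {H : Type*} [NormedAddCommGroup H] [InnerProductSpace ℂ H] [CompleteSpace H]
    (M N : H →L[ℂ] H) (hM : adjoint M = -M) (hN : adjoint N = -N)
    (l : ℝ) (hl : l ≠ 0) (hcomm : M * N - N * M = (l : ℂ) • N)
    (φ : H) (hφ : ∀ t : ℝ, exp ((t : ℂ) • M) φ = φ) :
    ∀ s : ℝ, exp ((s : ℂ) • N) φ = φ :=
  invariant_of_ad_eigenvector_general M N hM l hl hcomm φ hφ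
end

section
/- Let g be a finite-dimensional real Lie algebra and let m ∈ g. The following two statements are equivalent: (a) m together with the set of eigenvectors of ad(m) in g belonging to nonzero (real) eigenvalues generates g as a Lie algebra; (b) ad(m) : g → g is diagonalizable over ℝ and ℝ·m + [m,g] + [[m,g],[m,g]] = g, where for subsets A, B ⊆ g, [A,B] denotes the linear span of all brackets [a,b] with a ∈ A, b ∈ B. -/
/-!
The sum of the eigenspaces of `ad m` is a subalgebra, since eigenvalues add under brackets, and
it contains the generators; so (a) forces `ad m` to be diagonalizable. Once it is,
`[m, g]` is the sum of the eigenspaces with nonzero eigenvalue, all of which lie in the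
subalgebra generated, and `W = ℝ·m + [m, g] + [[m, g], [m, g]]` is an ideal: a bracket of
eigenvectors for `a ≠ 0` and `b` lies in the eigenspace for `a + b`, hence in `[m, g]`, unless
`a + b = 0`, in which case both factors lie in `[m, g]`; the Jacobi identity then handles
`[[m, g], [m, g]]`. Hence `W` is exactly the subalgebra generated.
-/

/-- The linear span of all brackets `⁅a, b⁆` with `a ∈ A`, `b ∈ B`. -/
def bracketSpan {L : Type*} [LieRing L] [LieAlgebra ℝ L] (A B : Submodule ℝ L) :
    Submodule ℝ L :=
  Submodule.span ℝ {x | ∃ a ∈ A, ∃ b ∈ B, x = ⁅a, b⁆}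

open Submodule

namespace Module.End

variable {K V : Type*} [Field K] [AddCommGroup V] [Module K V] {f : End K V}

lemma eigenspace_le_range {c : K} (hc : c ≠ 0) : f.eigenspace c ≤ LinearMap.range f := by
  intro x hx
  exact ⟨c⁻¹ • x, by rw [map_smul, mem_eigenspace_iff.mp hx, smul_smul, inv_mul_cancel₀ hc,
    one_smul]⟩

lemma range_le_iSup_eigenspace_ne_zero (hf : ⨆ c, f.eigenspace c = ⊤) :
    LinearMap.range f ≤ ⨆ (c : K) (_ : c ≠ 0), f.eigenspace c := by
  rw [LinearMap.range_eq_map, ← hf, Submodule.map_iSup, iSup_le_iff]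
  rintro c _ ⟨x, hx, rfl⟩
  rw [mem_eigenspace_iff.mp hx]
  rcases eq_or_ne c 0 with rfl | hc
  · rw [zero_smul]
    exact zero_mem _
  · exact smul_mem _ _ (mem_iSup_of_mem c (mem_iSup_of_mem hc hx))

end Module.End

namespace LieAlgebra

open LieSubalgebra

/-- `map₂ (lieBilin R L) P Q` is the span `[P, Q]` of all brackets of elements of `P` and `Q`. -/
abbrev lieBilin (R L : Type*) [CommRing R] [LieRing L] [LieAlgebra R L] :
    L →ₗ[R] L →ₗ[R] L :=
  ad R L

section CommRing

variable {R L : Type*} [CommRing R] [LieRing L] [LieAlgebra R L]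


lemma map₂_lieBilin_map₂_le (P Q N : Submodule R L) :
    map₂ (lieBilin R L) (map₂ (lieBilin R L) P Q) N ≤
      map₂ (lieBilin R L) P (map₂ (lieBilin R L) Q N) ⊔
        map₂ (lieBilin R L) Q (map₂ (lieBilin R L) P N) := by
  conv_lhs => rw [map₂_eq_span_image2 _ P Q, ← span_eq N, map₂_span_span]
  rw [span_le]
  rintro _ ⟨_, ⟨a, ha, b, hb, rfl⟩, n, hn, rfl⟩
  simp only [LieHom.coe_toLinearMap, ad_apply, lie_lie]
  exact sub_mem (mem_sup_left (apply_mem_map₂ _ ha (apply_mem_map₂ _ hb hn)))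
    (mem_sup_right (apply_mem_map₂ _ hb (apply_mem_map₂ _ ha hn)))

lemma lie_mem_eigenspace_add (m : L) {a b : R} {x y : L} (hx : x ∈ (ad R L m).eigenspace a)
    (hy : y ∈ (ad R L m).eigenspace b) : ⁅x, y⁆ ∈ (ad R L m).eigenspace (a + b) := by
  rw [Module.End.mem_eigenspace_iff, ad_apply] at hx hy ⊢
  rw [leibniz_lie, hx, hy, smul_lie, lie_smul, add_smul]

lemma map₂_lieBilin_eigenspace_le (m : L) (a b : R) :
    map₂ (lieBilin R L) ((ad R L m).eigenspace a) ((ad R L m).eigenspace b) ≤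
      (ad R L m).eigenspace (a + b) :=
  map₂_le.mpr fun _ hx _ hy => lie_mem_eigenspace_add m hx hy

end CommRing

variable {K L : Type*} [Field K] [LieRing L] [LieAlgebra K L]

variable (K) in
def iSupEigenspaceSubalgebra (m : L) : LieSubalgebra K L where
  toSubmodule := ⨆ c, (ad K L m).eigenspace c
  lie_mem' {x y} hx hy := by
    have hle : map₂ (lieBilin K L) (⨆ a, (ad K L m).eigenspace a)
        (⨆ b, (ad K L m).eigenspace b) ≤ ⨆ c, (ad K L m).eigenspace c := by
      simp only [map₂_iSup_left, map₂_iSup_right, iSup_le_iff]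
      exact fun b a => (map₂_lieBilin_eigenspace_le m a b).trans (le_iSup _ (a + b))
    exact hle (apply_mem_map₂ _ hx hy)

variable (K) in
def essentialGenerators (m : L) : Set L :=
  {m} ∪ {x | x ≠ 0 ∧ ∃ c : K, c ≠ 0 ∧ ⁅m, x⁆ = c • x}

lemma essentialGenerators_subset_iSupEigenspaceSubalgebra (m : L) :
    essentialGenerators K m ⊆ iSupEigenspaceSubalgebra K m := by
  rintro x (rfl | ⟨-, c, -, hc⟩)
  · exact mem_iSup_of_mem 0 (by rw [Module.End.mem_eigenspace_iff, ad_apply, lie_self, zero_smul])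
  · exact mem_iSup_of_mem c (by rw [Module.End.mem_eigenspace_iff, ad_apply, hc])

lemma iSup_eigenspace_eq_top_of_lieSpan_eq_top {m : L}
    (h : lieSpan K L (essentialGenerators K m) = ⊤) : ⨆ c, (ad K L m).eigenspace c = ⊤ := by
  have hle := lieSpan_le.mpr (essentialGenerators_subset_iSupEigenspaceSubalgebra (K := K) m)
  rw [h, top_le_iff] at hle
  exact congrArg toSubmodule hle

lemma range_ad_le_lieSpan {m : L} (hdiag : ⨆ c, (ad K L m).eigenspace c = ⊤) :
    LinearMap.range (ad K L m) ≤ (lieSpan K L (essentialGenerators K m)).toSubmodule := by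
  refine (Module.End.range_le_iSup_eigenspace_ne_zero hdiag).trans (iSup₂_le fun c hc x hx => ?_)
  rcases eq_or_ne x 0 with rfl | hx0
  · exact zero_mem _
  · exact subset_lieSpan (Or.inr ⟨hx0, c, hc, Module.End.mem_eigenspace_iff.mp hx⟩)

variable (K) in
def adSpan (m : L) : Submodule K L :=
  span K {m} ⊔ LinearMap.range (ad K L m) ⊔
    map₂ (lieBilin K L) (LinearMap.range (ad K L m)) (LinearMap.range (ad K L m))

lemma range_ad_le_adSpan (m : L) : LinearMap.range (ad K L m) ≤ adSpan K m :=
  le_sup_left.trans' le_sup_right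

lemma map₂_lieBilin_range_top_le_adSpan {m : L} (hdiag : ⨆ c, (ad K L m).eigenspace c = ⊤) :
    map₂ (lieBilin K L) (LinearMap.range (ad K L m)) ⊤ ≤ adSpan K m := by
  refine (map₂_le_map₂_left (Module.End.range_le_iSup_eigenspace_ne_zero hdiag)).trans ?_
  rw [← hdiag]
  simp only [map₂_iSup_left, map₂_iSup_right, iSup_le_iff]
  intro b a ha
  rcases eq_or_ne (a + b) 0 with hab | hab
  · have hb : b ≠ 0 := fun hb => ha (by rwa [hb, add_zero] at hab)
    exact (map₂_le_map₂ (Module.End.eigenspace_le_range ha)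
      (Module.End.eigenspace_le_range hb)).trans le_sup_right
  · exact (map₂_lieBilin_eigenspace_le m a b).trans
      ((Module.End.eigenspace_le_range hab).trans (range_ad_le_adSpan m))

lemma map₂_lieBilin_adSpan_top_le {m : L} (hdiag : ⨆ c, (ad K L m).eigenspace c = ⊤) :
    map₂ (lieBilin K L) (adSpan K m) ⊤ ≤ adSpan K m := by
  have hR := map₂_lieBilin_range_top_le_adSpan hdiag
  have hRR : ∀ N, map₂ (lieBilin K L) (LinearMap.range (ad K L m)) N ≤ adSpan K m :=
    fun N => (map₂_le_map₂_right le_top).trans hR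
  rw [adSpan, map₂_sup_left, map₂_sup_left, map₂_span_singleton_eq_map, Submodule.map_top]
  exact sup_le (sup_le (range_ad_le_adSpan m) hR)
    ((map₂_lieBilin_map₂_le _ _ _).trans (sup_le (hRR _) (hRR _)))

lemma adSpan_eq_lieSpan {m : L} (hdiag : ⨆ c, (ad K L m).eigenspace c = ⊤) :
    adSpan K m = (lieSpan K L (essentialGenerators K m)).toSubmodule := by
  refine le_antisymm ?_ ?_
  · have hR := range_ad_le_lieSpan hdiag
    refine sup_le (sup_le ?_ hR) (map₂_le.mpr fun x hx y hy => lie_mem _ (hR hx) (hR hy))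
    exact span_le.mpr (Set.singleton_subset_iff.mpr (subset_lieSpan (Or.inl rfl)))
  · let W : LieSubalgebra K L :=
      { adSpan K m with
        lie_mem' hx _ := map₂_lieBilin_adSpan_top_le hdiag (apply_mem_map₂ _ hx mem_top) }
    refine (toSubmodule_le_toSubmodule (lieSpan K L _) W).mpr (lieSpan_le.mpr ?_)
    rintro x (rfl | ⟨-, c, hc, hx⟩)
    · exact mem_sup_left (mem_sup_left (mem_span_singleton_self x))
    · exact range_ad_le_adSpan m (Module.End.eigenspace_le_range hc
        (Module.End.mem_eigenspace_iff.mpr hx))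

end LieAlgebra

lemma bracketSpan_eq_map₂ {L : Type*} [LieRing L] [LieAlgebra ℝ L] (A B : Submodule ℝ L) :
    bracketSpan A B = map₂ (LieAlgebra.lieBilin ℝ L) A B := by
  rw [bracketSpan, map₂_eq_span_image2]
  congr 1
  ext x
  simp [Set.mem_image2, eq_comm]

theorem essential_iff_general {L : Type*} [LieRing L] [LieAlgebra ℝ L]
    (m : L) :
    LieSubalgebra.lieSpan ℝ L
        ({m} ∪ {x | x ≠ 0 ∧ ∃ c : ℝ, c ≠ 0 ∧ ⁅m, x⁆ = c • x}) = ⊤ ↔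
      (⨆ c : ℝ, (LieAlgebra.ad ℝ L m).eigenspace c) = ⊤ ∧
        Submodule.span ℝ {m} ⊔ LinearMap.range (LieAlgebra.ad ℝ L m) ⊔
          bracketSpan (LinearMap.range (LieAlgebra.ad ℝ L m))
            (LinearMap.range (LieAlgebra.ad ℝ L m)) = ⊤ := by
  rw [bracketSpan_eq_map₂]
  change LieSubalgebra.lieSpan ℝ L (LieAlgebra.essentialGenerators ℝ m) = ⊤ ↔
    _ ∧ LieAlgebra.adSpan ℝ m = ⊤
  constructor
  · intro h
    have hdiag := LieAlgebra.iSup_eigenspace_eq_top_of_lieSpan_eq_top h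
    exact ⟨hdiag, by rw [LieAlgebra.adSpan_eq_lieSpan hdiag, h, LieSubalgebra.top_toSubmodule]⟩
  · rintro ⟨hdiag, h⟩
    rwa [← LieSubalgebra.toSubmodule_eq_top, ← LieAlgebra.adSpan_eq_lieSpan hdiag]

/-- Lemma 2: for `m` in a finite-dimensional real Lie algebra `g`, the following are
equivalent: (a) `m` together with the eigenvectors of `ad m` for nonzero real eigenvalues
generates `g` as a Lie algebra; (b) `ad m` is diagonalizable over `ℝ` and
`ℝ·m + [m,g] + [[m,g],[m,g]] = g`. -/
theorem essential_iff {L : Type*} [LieRing L] [LieAlgebra ℝ L] [FiniteDimensional ℝ L]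
    (m : L) :
    LieSubalgebra.lieSpan ℝ L
        ({m} ∪ {x | x ≠ 0 ∧ ∃ c : ℝ, c ≠ 0 ∧ ⁅m, x⁆ = c • x}) = ⊤ ↔
      (⨆ c : ℝ, (LieAlgebra.ad ℝ L m).eigenspace c) = ⊤ ∧
        Submodule.span ℝ {m} ⊔ LinearMap.range (LieAlgebra.ad ℝ L m) ⊔
          bracketSpan (LinearMap.range (LieAlgebra.ad ℝ L m))
            (LinearMap.range (LieAlgebra.ad ℝ L m)) = ⊤ :=
  essential_iff_general m
end

section
/- Let H be a complex Hilbert space and let G ⊆ B(H) be a finite-dimensional real Lie algebra of bounded skew-adjoint operators on H (with bracket the commutator [A,B] = AB − BA). Suppose M ∈ G is essential in G, and let φ ∈ H satisfy exp(tM)φ = φ for all t ∈ ℝ. Then exp(N)φ = φ for every N ∈ G. -/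
open NormedSpace ContinuousLinearMap

attribute [local instance 100] LieRing.ofAssociativeRing

/-- `m` is essential: `ad m` is diagonalizable over `ℝ` and
`ℝ·m + [m,g] + [[m,g],[m,g]] = g`. -/
def Essential {L : Type*} [LieRing L] [LieAlgebra ℝ L] (m : L) : Prop :=
  (⨆ c : ℝ, (LieAlgebra.ad ℝ L m).eigenspace c) = ⊤ ∧
    Submodule.span ℝ {m} ⊔ LinearMap.range (LieAlgebra.ad ℝ L m) ⊔
      bracketSpan (LinearMap.range (LieAlgebra.ad ℝ L m))
        (LinearMap.range (LieAlgebra.ad ℝ L m)) = ⊤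

/-! Differentiating the invariance at `t = 0` gives `M φ = 0`. The elements of `G` killing `φ`
form a Lie subalgebra containing `M`. If `⁅M, X⁆ = c • X` with real `c ≠ 0`, then
`M (X φ) = c • X φ`, and a skew-adjoint operator has no nonzero real eigenvalue, so `X φ = 0`.
As `ad M` is diagonalizable, the subalgebra therefore contains `[M, G]`, hence
`[[M, G], [M, G]]`, and essentiality makes it all of `G`. Finally `N φ = 0` gives `exp N φ = φ`. -/

theorem exp_apply_eq_self_of_apply_eq_zero {𝕜 E : Type*} [RCLike 𝕜] [NormedAddCommGroup E]
    [NormedSpace 𝕜 E] [CompleteSpace E] {T : E →L[𝕜] E} {x : E} (h : T x = 0) :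
    exp T x = x := by
  have hsum : Summable fun n : ℕ => (n.factorial : 𝕜)⁻¹ • T ^ n := expSeries_summable' T
  rw [exp_eq_tsum 𝕜, ← apply_apply (v := x), (apply 𝕜 E x).map_tsum hsum, tsum_eq_single 0]
  · simp
  · rintro (_ | n) hn
    · exact absurd rfl hn
    · simp [pow_succ, h]

theorem apply_eq_zero_of_forall_exp_smul_apply_eq_s6 {E : Type*} [NormedAddCommGroup E]
    [NormedSpace ℂ E] [CompleteSpace E] {T : E →L[ℂ] E} {x : E}
    (h : ∀ t : ℝ, exp ((t : ℂ) • T) x = x) : T x = 0 := by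
  let ev : (E →L[ℂ] E) →L[ℝ] E := (apply ℂ E x).restrictScalars ℝ
  have hderiv : HasDerivAt (fun t : ℝ => ev (exp (t • T))) (ev (exp ((0 : ℝ) • T) * T)) 0 :=
    ev.hasFDerivAt.comp_hasDerivAt 0 (hasDerivAt_exp_smul_const T 0)
  have hconst : (fun t : ℝ => ev (exp (t • T))) = fun _ => x := by
    funext t
    simpa [ev, Complex.coe_smul] using h t
  rw [hconst] at hderiv
  simpa [ev] using hderiv.unique (hasDerivAt_const 0 x)

theorem eq_zero_of_adjoint_eq_neg_of_apply_eq_smul {𝕜 E : Type*} [RCLike 𝕜]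
    [NormedAddCommGroup E] [InnerProductSpace 𝕜 E] [CompleteSpace E] {T : E →L[𝕜] E}
    (hT : adjoint T = -T) {c : ℝ} (hc : c ≠ 0) {x : E} (hx : T x = (c : 𝕜) • x) : x = 0 := by
  have hinner : inner 𝕜 (T x) x = inner 𝕜 x (-T x) := by
    rw [← neg_apply, ← hT, adjoint_inner_right]
  simp only [hx, inner_smul_left, inner_neg_right, inner_smul_right, RCLike.conj_ofReal] at hinner
  have : ((2 * c : ℝ) : 𝕜) * inner 𝕜 x x = 0 := by push_cast; linear_combination hinner
  simpa [hc] using this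

theorem Module.End.range_le_of_iSup_eigenspace_eq_top {R V : Type*} [CommRing R]
    [AddCommGroup V] [Module R V] {f : Module.End R V} (hf : ⨆ c, f.eigenspace c = ⊤)
    {p : Submodule R V} (hp : ∀ c ≠ 0, f.eigenspace c ≤ p) : LinearMap.range f ≤ p := by
  rw [LinearMap.range_eq_map, ← hf, Submodule.map_iSup, iSup_le_iff]
  rintro c _ ⟨x, hx, rfl⟩
  rw [Module.End.mem_eigenspace_iff.1 hx]
  rcases eq_or_ne c 0 with rfl | hc
  · simp
  · exact p.smul_mem c (hp c hc hx)

theorem bracketSpan_le {L : Type*} [LieRing L] [LieAlgebra ℝ L] {K : LieSubalgebra ℝ L}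
    {A B : Submodule ℝ L} (hA : A ≤ K.toSubmodule) (hB : B ≤ K.toSubmodule) :
    bracketSpan A B ≤ K.toSubmodule := by
  rw [bracketSpan, Submodule.span_le]
  rintro _ ⟨a, ha, b, hb, rfl⟩
  exact K.lie_mem (hA ha) (hB hb)

theorem LieSubalgebra.eq_top_of_essential {L : Type*} [LieRing L] [LieAlgebra ℝ L] {m : L}
    (hm : Essential m) {K : LieSubalgebra ℝ L} (hmK : m ∈ K)
    (hK : ∀ c : ℝ, c ≠ 0 → ∀ x, ⁅m, x⁆ = c • x → x ∈ K) : K = ⊤ := by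
  have hrange : LinearMap.range (LieAlgebra.ad ℝ L m) ≤ K.toSubmodule :=
    Module.End.range_le_of_iSup_eigenspace_eq_top hm.1 fun c hc x hx =>
      hK c hc x (Module.End.mem_eigenspace_iff.1 hx)
  rw [← LieSubalgebra.toSubmodule_inj, LieSubalgebra.top_toSubmodule, eq_top_iff, ← hm.2]
  refine sup_le (sup_le ?_ hrange) (bracketSpan_le hrange hrange)
  rwa [Submodule.span_le, Set.singleton_subset_iff]

def annihilatorLieSubalgebra (R : Type*) {A M : Type*} [CommRing R] [Ring A] [Algebra R A]
    [AddCommGroup M] [Module A M] (x : M) : LieSubalgebra R A where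
  carrier := {a | a • x = 0}
  add_mem' {a b} ha hb := by simp_all [add_smul]
  zero_mem' := zero_smul A x
  smul_mem' r a ha := by simp_all [Algebra.smul_def, mul_smul]
  lie_mem' {a b} ha hb := by simp_all [Ring.lie_def, sub_smul, mul_smul]

theorem apply_apply_eq_smul_of_lie_eq_smul {𝕜 E : Type*} [RCLike 𝕜] [NormedAddCommGroup E]
    [NormedSpace 𝕜 E] {S T : E →L[𝕜] E} {c : 𝕜} (h : ⁅S, T⁆ = c • T) {x : E} (hx : S x = 0) :
    S (T x) = c • T x := by
  simpa [Ring.lie_def, hx] using congr($h x)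

theorem invariant_of_essential_general
    {H : Type*} [NormedAddCommGroup H] [InnerProductSpace ℂ H] [CompleteSpace H]
    (G : LieSubalgebra ℝ (H →L[ℂ] H))
    (hskew : ∀ A ∈ G, adjoint A = -A)
    (M : G) (hM : Essential M)
    (φ : H) (hφ : ∀ t : ℝ, exp ((t : ℂ) • (M : H →L[ℂ] H)) φ = φ) :
    ∀ N : G, exp (N : H →L[ℂ] H) φ = φ := by
  have hMφ : (M : H →L[ℂ] H) φ = 0 := apply_eq_zero_of_forall_exp_smul_apply_eq_s6 hφ
  -- membership in the annihilator is `N • φ = 0`, which is `N φ = 0` by definition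
  have hK : (annihilatorLieSubalgebra ℝ φ).comap G.incl = ⊤ := by
    refine LieSubalgebra.eq_top_of_essential hM hMφ fun c hc X hX => ?_
    have hlie : ⁅(M : H →L[ℂ] H), (X : H →L[ℂ] H)⁆ = (c : ℂ) • (X : H →L[ℂ] H) := by
      rw [Complex.coe_smul]; exact congr(($hX : H →L[ℂ] H))
    exact eq_zero_of_adjoint_eq_neg_of_apply_eq_smul (hskew M M.2) hc
      (apply_apply_eq_smul_of_lie_eq_smul hlie hMφ)
  intro N
  exact exp_apply_eq_self_of_apply_eq_zero (show N ∈ _ from hK ▸ LieSubalgebra.mem_top N)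

/-- Corollary 1, bounded-operator version: let `G` be a finite-dimensional real Lie
algebra of bounded skew-adjoint operators on a complex Hilbert space `H`, let `M ∈ G` be
essential, and let `φ` be invariant under `exp(tM)` for all real `t`. Then
`exp(N) φ = φ` for every `N ∈ G`. -/
theorem invariant_of_essential
    {H : Type*} [NormedAddCommGroup H] [InnerProductSpace ℂ H] [CompleteSpace H]
    (G : LieSubalgebra ℝ (H →L[ℂ] H)) [FiniteDimensional ℝ G]
    (hskew : ∀ A ∈ G, adjoint A = -A)
    (M : G) (hM : Essential M)
    (φ : H) (hφ : ∀ t : ℝ, exp ((t : ℂ) • (M : H →L[ℂ] H)) φ = φ) :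
    ∀ N : G, exp (N : H →L[ℂ] H) φ = φ :=
  invariant_of_essential_general G hskew M hM φ hφ
end

section
/- For n ≥ 3, the real Lie algebra so(n) of real skew-symmetric n×n matrices (with bracket the matrix commutator) has no essential elements. -/
open Matrix

attribute [local instance 100] LieRing.ofAssociativeRing

/-- `so(n)`: the real Lie algebra of skew-symmetric `n × n` real matrices. -/
def soLie (n : ℕ) : LieSubalgebra ℝ (Matrix (Fin n) (Fin n) ℝ) where
  carrier := {X | Xᵀ = -X}
  zero_mem' := by simp
  add_mem' := by
    intro a b ha hb
    simp only [Set.mem_setOf_eq] at ha hb ⊢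
    rw [transpose_add, ha, hb, neg_add]
  smul_mem' := by
    intro r X hX
    simp only [Set.mem_setOf_eq] at hX ⊢
    rw [transpose_smul, hX, smul_neg]
  lie_mem' := by
    intro X Y hX hY
    simp only [Set.mem_setOf_eq] at hX hY ⊢
    rw [Ring.lie_def, transpose_sub, transpose_mul, transpose_mul, hX, hY,
      neg_mul_neg, neg_mul_neg, neg_sub]

/-!
The trace form `⟨X, Y⟩ = tr (Xᵀ Y)` is positive definite on real matrices, and `ad m` is
skew-adjoint for it when `m` is skew-symmetric. Hence a real eigenvector `X` of `ad m` with
eigenvalue `c` satisfies `c ⟨X, X⟩ = ⟨X, ⁅m, X⁆⟩ = 0`, so the only real eigenvalue is `0`, and a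
diagonalizable `ad m` vanishes. The defining identity of an essential element then collapses to
`ℝ m = so(n)`, impossible since `so(n)` contains two independent rotations once `n ≥ 3`.
-/

namespace Matrix

variable {ι : Type*} [Fintype ι]

theorem trace_eq_zero_of_transpose_eq_neg {A : Matrix ι ι ℝ} (hA : Aᵀ = -A) : A.trace = 0 := by
  have h := A.trace_transpose
  rw [hA, trace_neg] at h
  linarith

theorem trace_transpose_mul_lie_self {m : Matrix ι ι ℝ} (hm : mᵀ = -m) (X : Matrix ι ι ℝ) :
    (Xᵀ * ⁅m, X⁆).trace = 0 := by
  have h₁ : (Xᵀ * m * X)ᵀ = -(Xᵀ * m * X) := by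
    simp only [transpose_mul, transpose_transpose, hm, Matrix.mul_neg, Matrix.neg_mul,
      Matrix.mul_assoc]
  have h₂ : (Xᵀ * X * m).trace = -(Xᵀ * X * m).trace := by
    conv_lhs => rw [← trace_transpose]
    rw [transpose_mul, hm, transpose_mul, transpose_transpose, Matrix.neg_mul, trace_neg,
      trace_mul_comm]
  rw [Ring.lie_def, Matrix.mul_sub, trace_sub, ← Matrix.mul_assoc, ← Matrix.mul_assoc,
    trace_eq_zero_of_transpose_eq_neg h₁, zero_sub, neg_eq_zero]
  linarith

theorem eq_zero_of_lie_eq_smul {m X : Matrix ι ι ℝ} (hm : mᵀ = -m) {c : ℝ} (hc : c ≠ 0)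
    (h : ⁅m, X⁆ = c • X) : X = 0 := by
  have h₀ := trace_transpose_mul_lie_self hm X
  rw [h, Matrix.mul_smul, trace_smul, smul_eq_mul] at h₀
  rw [← trace_conjTranspose_mul_self_eq_zero_iff, conjTranspose_eq_transpose_of_trivial]
  exact (mul_eq_zero.mp h₀).resolve_left hc

end Matrix

theorem Module.End.eq_zero_of_iSup_eigenspace_eq_top {K V : Type*} [CommRing K] [AddCommGroup V]
    [Module K V] {f : Module.End K V} (h : ⨆ c, f.eigenspace c = ⊤)
    (hf : ∀ c ≠ 0, f.eigenspace c = ⊥) : f = 0 := by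
  suffices ⊤ ≤ LinearMap.ker f from LinearMap.ker_eq_top.mp (top_le_iff.mp this)
  refine h ▸ iSup_le fun c ↦ ?_
  rcases eq_or_ne c 0 with rfl | hc
  · exact (eigenspace_zero f).le
  · exact (hf c hc).le.trans bot_le

theorem Essential.span_singleton_eq_top {L : Type*} [LieRing L] [LieAlgebra ℝ L] {m : L}
    (hm : Essential m) (had : LieAlgebra.ad ℝ L m = 0) : Submodule.span ℝ {m} = ⊤ := by
  have hbot : bracketSpan (⊥ : Submodule ℝ L) ⊥ = ⊥ := by
    rw [bracketSpan, Submodule.span_eq_bot]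
    rintro _ ⟨a, ha, b, -, rfl⟩
    rw [(Submodule.mem_bot ℝ).mp ha, zero_lie]
  simpa [had, hbot] using hm.2

namespace soLie

variable {n : ℕ}

theorem eigenspace_ad_eq_bot (m : soLie n) {c : ℝ} (hc : c ≠ 0) :
    (LieAlgebra.ad ℝ (soLie n) m).eigenspace c = ⊥ := by
  refine (Submodule.eq_bot_iff _).mpr fun X hX ↦ Subtype.ext ?_
  rw [Module.End.mem_eigenspace_iff, LieAlgebra.ad_apply] at hX
  exact Matrix.eq_zero_of_lie_eq_smul m.2 hc (congrArg Subtype.val hX)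

def rotation (i j : Fin n) : soLie n :=
  ⟨single i j 1 - single j i 1, by
    show _ = _
    rw [transpose_sub, transpose_single, transpose_single, neg_sub]⟩

theorem two_le_rank (hn : 3 ≤ n) : 2 ≤ Module.rank ℝ (soLie n) := by
  let i₀ : Fin n := ⟨0, by omega⟩
  let i₁ : Fin n := ⟨1, by omega⟩
  let i₂ : Fin n := ⟨2, by omega⟩
  refine Module.le_rank_iff.mpr ⟨![rotation i₀ i₁, rotation i₀ i₂], ?_⟩
  refine LinearIndependent.pair_iff.mpr fun s t hst ↦ ?_
  have h := congrArg Subtype.val hst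
  have h₁ := congrFun (congrFun h i₀) i₁
  have h₂ := congrFun (congrFun h i₀) i₂
  simp [rotation, i₀, i₁, i₂] at h₁ h₂
  exact ⟨h₁, h₂⟩

end soLie

/-- For `n ≥ 3`, the real Lie algebra `so(n)` has no essential elements. -/
theorem soLie_no_essential (n : ℕ) (hn : 3 ≤ n) : ∀ m : soLie n, ¬ Essential m := by
  intro m hm
  have had : LieAlgebra.ad ℝ (soLie n) m = 0 :=
    Module.End.eq_zero_of_iSup_eigenspace_eq_top hm.1 fun _ ↦ soLie.eigenspace_ad_eq_bot m
  have hprincipal : (⊤ : Submodule ℝ (soLie n)).IsPrincipal :=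
    ⟨m, (hm.span_singleton_eq_top had).symm⟩
  have := (soLie.two_le_rank hn).trans (Module.rank_le_one_iff_top_isPrincipal.mpr hprincipal)
  norm_num at this
end

section
/- Let n ≥ 1 and consider the real Lie algebra gl(n,ℝ) of all real n×n matrices with bracket the matrix commutator. For every ν with 1 ≤ ν ≤ n, the matrix unit e_{νν} = E(ν,ν) (the matrix with a 1 in position (ν,ν) and zeros elsewhere) is an essential element of gl(n,ℝ). -/
open Matrix

attribute [local instance 100] LieRing.ofAssociativeRing

/-!
`ad e_{νν}` multiplies `e_{ij}` by `δ_{iν} - δ_{jν}`, so the matrix units form an eigenbasis.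
Its range contains `e_{νj}` and `e_{iν}` for `i, j ≠ ν`, and for such `i, j` the bracket
`⁅e_{νj}, e_{iν}⁆ = δ_{ij} e_{νν} - e_{ij}` produces every remaining matrix unit modulo `ℝ e_{νν}`.
-/

namespace Matrix

variable {ι R : Type*} [Fintype ι] [DecidableEq ι]

theorem submodule_eq_top_of_single_one_mem {m n : Type*} [Fintype m] [Finite n]
    [DecidableEq m] [DecidableEq n] [Semiring R] {S : Submodule R (Matrix m n R)}
    (h : ∀ i j, single i j (1 : R) ∈ S) : S = ⊤ := by
  rw [eq_top_iff, ← (stdBasis R m n).span_eq, Submodule.span_le]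
  rintro _ ⟨⟨i, j⟩, rfl⟩
  rw [stdBasis_eq_single]
  exact h i j

theorem lie_single_one_single_one [Ring R] (a b c d : ι) :
    ⁅single a b (1 : R), single c d (1 : R)⁆ =
      (if b = c then single a d 1 else 0) - (if d = a then single c b 1 else 0) := by
  rw [Ring.lie_def]
  split_ifs <;> simp_all [single_mul_single_of_ne]

theorem lie_single_diag_single [Ring R] (ν i j : ι) :
    ⁅single ν ν (1 : R), single i j (1 : R)⁆ =
      ((if i = ν then 1 else 0) - (if j = ν then 1 else 0) : R) • single i j 1 := by
  rw [lie_single_one_single_one]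
  split_ifs <;> simp_all

variable [CommRing R]

theorem single_one_mem_eigenspace_ad_single_diag (ν i j : ι) :
    single i j (1 : R) ∈ (LieAlgebra.ad R _ (single ν ν (1 : R))).eigenspace
      ((if i = ν then 1 else 0) - (if j = ν then 1 else 0)) := by
  rw [Module.End.mem_eigenspace_iff, LieAlgebra.ad_apply, lie_single_diag_single]

theorem iSup_eigenspace_ad_single_diag_eq_top (ν : ι) :
    ⨆ c : R, (LieAlgebra.ad R _ (single ν ν (1 : R))).eigenspace c = ⊤ :=
  submodule_eq_top_of_single_one_mem fun i j =>
    Submodule.mem_iSup_of_mem _ (single_one_mem_eigenspace_ad_single_diag ν i j)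

theorem single_one_mem_range_ad_single_diag_of_left {ν j : ι} (hj : j ≠ ν) :
    single ν j (1 : R) ∈ LinearMap.range (LieAlgebra.ad R _ (single ν ν (1 : R))) :=
  ⟨single ν j 1, by simp [lie_single_diag_single, hj]⟩

theorem single_one_mem_range_ad_single_diag_of_right {ν i : ι} (hi : i ≠ ν) :
    single i ν (1 : R) ∈ LinearMap.range (LieAlgebra.ad R _ (single ν ν (1 : R))) :=
  ⟨-single i ν 1, by simp [lie_single_diag_single, hi]⟩

end Matrix

section Essential

variable {ι : Type*} [Fintype ι] [DecidableEq ι]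

theorem single_one_mem_span_sup_bracketSpan_range_ad {ν i j : ι} (hi : i ≠ ν) (hj : j ≠ ν) :
    single i j (1 : ℝ) ∈ Submodule.span ℝ {single ν ν 1} ⊔
      bracketSpan (LinearMap.range (LieAlgebra.ad ℝ _ (single ν ν (1 : ℝ))))
        (LinearMap.range (LieAlgebra.ad ℝ _ (single ν ν (1 : ℝ)))) := by
  have hbracket := lie_single_one_single_one (R := ℝ) ν j i ν
  rw [if_pos rfl] at hbracket
  rw [show single i j (1 : ℝ) =
      (if j = i then single ν ν 1 else 0) - ⁅single ν j (1 : ℝ), single i ν 1⁆ by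
    rw [hbracket, sub_sub_cancel]]
  refine Submodule.sub_mem _ (Submodule.mem_sup_left ?_) (Submodule.mem_sup_right ?_)
  · split_ifs
    exacts [Submodule.mem_span_singleton_self _, Submodule.zero_mem _]
  · exact Submodule.subset_span ⟨_, single_one_mem_range_ad_single_diag_of_left hj,
      _, single_one_mem_range_ad_single_diag_of_right hi, rfl⟩

theorem essential_single_diag (ν : ι) : Essential (single ν ν (1 : ℝ)) := by
  refine ⟨iSup_eigenspace_ad_single_diag_eq_top ν,
    submodule_eq_top_of_single_one_mem fun i j => ?_⟩
  by_cases hi : i = ν <;> by_cases hj : j = ν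
  · subst hi hj
    exact Submodule.mem_sup_left (Submodule.mem_sup_left (Submodule.mem_span_singleton_self _))
  · subst hi
    exact Submodule.mem_sup_left
      (Submodule.mem_sup_right (single_one_mem_range_ad_single_diag_of_left hj))
  · subst hj
    exact Submodule.mem_sup_left
      (Submodule.mem_sup_right (single_one_mem_range_ad_single_diag_of_right hi))
  · exact SetLike.le_def.mp (sup_le_sup_right le_sup_left _)
      (single_one_mem_span_sup_bracketSpan_range_ad hi hj)

end Essential

theorem gl_stdBasisMatrix_essential_general (n : ℕ) (ν : Fin n) :
    Essential (single ν ν (1 : ℝ)) :=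
  essential_single_diag ν

/-- In `gl(n,ℝ)` (all real `n × n` matrices with the commutator bracket), each matrix
unit `e_{νν} = E(ν,ν)` is essential. -/
theorem gl_stdBasisMatrix_essential (n : ℕ) (hn : 1 ≤ n) (ν : Fin n) :
    Essential (single ν ν (1 : ℝ)) :=
  gl_stdBasisMatrix_essential_general n ν
end

section
/- Let n ≥ 2 and consider the real Lie algebra sl(n,ℝ) of traceless real n×n matrices with bracket the matrix commutator. For every ν with 1 ≤ ν ≤ n−1, the matrix e_ν = E(ν,ν) − E(ν+1,ν+1) is an essential element of sl(n,ℝ). -/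
open Matrix

attribute [local instance 100] LieRing.ofAssociativeRing

/-- `sl(n,ℝ)`: the real Lie algebra of traceless real `n × n` matrices. -/
def slLie (n : ℕ) : LieSubalgebra ℝ (Matrix (Fin n) (Fin n) ℝ) where
  carrier := {X | X.trace = 0}
  zero_mem' := by simp
  add_mem' := by
    intro a b ha hb
    simp only [Set.mem_setOf_eq] at ha hb ⊢
    rw [trace_add, ha, hb, add_zero]
  smul_mem' := by
    intro r X hX
    simp only [Set.mem_setOf_eq] at hX ⊢
    rw [trace_smul, hX, smul_zero]
  lie_mem' := by
    intro X Y _ _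
    simp only [Set.mem_setOf_eq]
    rw [Ring.lie_def, trace_sub, trace_mul_comm, sub_self]

/-!
`e_ν = diagonal a` with `a ν = 1`, `a (ν+1) = -1` and `a i = 0` otherwise. For any real diagonal
`m = diagonal a`, `ad m` scales `E(i,j)` by `a i - a j`; fixing a pivot `p`, the matrices `E(i,j)`
(`i ≠ j`) and `E(i,i) - E(p,p)` span `sl(n)`, so `ad m` is diagonalizable. If moreover `a p`
differs from every other entry (as `a ν = 1` does), then all `E(i,p)` and `E(p,j)` have nonzero
weight, hence lie in `[m,g]`, and their brackets `[E(i,p), E(p,j)]` produce the remaining spanning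
elements: already `[m,g] + [[m,g],[m,g]] = g`.
-/

theorem LinearMap.mem_range_of_apply_eq_smul {K V : Type*} [DivisionRing K] [AddCommGroup V]
    [Module K V] (f : V →ₗ[K] V) {c : K} (hc : c ≠ 0) {x : V} (hx : f x = c • x) :
    x ∈ LinearMap.range f :=
  ⟨c⁻¹ • x, by rw [map_smul, hx, smul_smul, inv_mul_cancel₀ hc, one_smul]⟩

namespace Matrix

variable {ι R : Type*} [DecidableEq ι] [CommRing R]

theorem lie_diagonal_apply [Fintype ι] (a : ι → R) (X : Matrix ι ι R) (k l : ι) :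
    ⁅diagonal a, X⁆ k l = (a k - a l) * X k l := by
  simp only [Ring.lie_def, sub_apply, diagonal_mul, mul_diagonal]
  ring

/-- For a fixed pivot `p`, these span the traceless matrices. -/
def pivotSingle (p i j : ι) : Matrix ι ι R :=
  single i j 1 - if i = j then single p p 1 else 0

theorem trace_pivotSingle [Fintype ι] (p i j : ι) :
    (pivotSingle p i j : Matrix ι ι R).trace = 0 := by
  rcases eq_or_ne i j with rfl | h
  · simp [pivotSingle]
  · simp [pivotSingle, h]

theorem pivotSingle_of_ne {p i j : ι} (h : i ≠ j) :
    (pivotSingle p i j : Matrix ι ι R) = single i j 1 := by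
  simp [pivotSingle, h]

theorem pivotSingle_self (p : ι) : (pivotSingle p p p : Matrix ι ι R) = 0 := by
  simp [pivotSingle]

theorem lie_diagonal_pivotSingle [Fintype ι] (a : ι → R) (p i j : ι) :
    ⁅diagonal a, pivotSingle p i j⁆ = (a i - a j) • (pivotSingle p i j : Matrix ι ι R) := by
  ext k l
  rw [lie_diagonal_apply, smul_apply, smul_eq_mul]
  rcases eq_or_ne i j with rfl | hij
  · by_cases hkl : k = l
    · simp [hkl]
    · have hi : ¬(i = k ∧ i = l) := fun h => hkl (h.1 ▸ h.2)
      have hp : ¬(p = k ∧ p = l) := fun h => hkl (h.1 ▸ h.2)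
      simp [pivotSingle, single, hi, hp]
  · by_cases h : i = k ∧ j = l
    · rw [h.1, h.2]
    · simp [pivotSingle, single, hij, h]

theorem lie_pivotSingle_pivot [Fintype ι] {p i j : ι} (hi : i ≠ p) (hj : j ≠ p) :
    ⁅(pivotSingle p i p : Matrix ι ι R), pivotSingle p p j⁆ =
      (pivotSingle p i j : Matrix ι ι R) := by
  rw [pivotSingle_of_ne hi, pivotSingle_of_ne hj.symm, Ring.lie_def, single_mul_single_same]
  rcases eq_or_ne i j with rfl | hij
  · simp [pivotSingle]
  · simp [single_mul_single_of_ne _ _ _ _ (Ne.symm hij), pivotSingle, hij]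

theorem eq_sum_pivotSingle [Fintype ι] (p : ι) {X : Matrix ι ι R} (hX : X.trace = 0) :
    X = ∑ i, ∑ j, X i j • pivotSingle p i j := by
  have hdiag : ∑ i, ∑ j, (if i = j then single p p (X i j) else 0) = 0 := by
    simp only [Finset.sum_ite_eq, Finset.mem_univ, if_true]
    rw [← single_zero p p, ← show ∑ i, X i i = 0 from hX]
    exact (map_sum (singleAddMonoidHom p p) (fun i => X i i) _).symm
  simp only [pivotSingle, smul_sub, smul_single, smul_eq_mul, mul_one, smul_ite, smul_zero,
    Finset.sum_sub_distrib, hdiag, sub_zero]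
  exact matrix_eq_sum_single X

end Matrix

namespace slLie

open Matrix

variable {n : ℕ}

def pivotSingle (p i j : Fin n) : slLie n :=
  ⟨Matrix.pivotSingle p i j, trace_pivotSingle (R := ℝ) p i j⟩

theorem eq_top_of_pivotSingle_mem (p : Fin n) {S : Submodule ℝ (slLie n)}
    (h : ∀ i j, pivotSingle p i j ∈ S) : S = ⊤ := by
  refine eq_top_iff.2 fun x _ => ?_
  have hx : x = ∑ i, ∑ j, (x : Matrix (Fin n) (Fin n) ℝ) i j • pivotSingle p i j :=
    Subtype.ext (by push_cast; exact eq_sum_pivotSingle p x.2)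
  rw [hx]
  exact Submodule.sum_mem _ fun i _ => Submodule.sum_mem _ fun j _ => S.smul_mem _ (h i j)

variable {a : Fin n → ℝ} {m : slLie n}

theorem ad_pivotSingle (hm : (m : Matrix (Fin n) (Fin n) ℝ) = diagonal a) (p i j : Fin n) :
    LieAlgebra.ad ℝ (slLie n) m (pivotSingle p i j) = (a i - a j) • pivotSingle p i j :=
  Subtype.ext <| by
    rw [LieAlgebra.ad_apply, LieSubalgebra.coe_bracket, hm]
    exact lie_diagonal_pivotSingle a p i j

theorem iSup_eigenspace_ad_eq_top (hm : (m : Matrix (Fin n) (Fin n) ℝ) = diagonal a) :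
    (⨆ c : ℝ, (LieAlgebra.ad ℝ (slLie n) m).eigenspace c) = ⊤ := by
  rcases isEmpty_or_nonempty (Fin n) with _ | ⟨⟨p⟩⟩
  · exact Subsingleton.elim _ _
  refine eq_top_of_pivotSingle_mem p fun i j => ?_
  refine Submodule.mem_iSup_of_mem (a i - a j) ?_
  exact Module.End.mem_eigenspace_iff.2 (ad_pivotSingle hm p i j)

theorem range_ad_sup_bracketSpan_eq_top (hm : (m : Matrix (Fin n) (Fin n) ℝ) = diagonal a)
    {p : Fin n} (hp : ∀ i ≠ p, a i ≠ a p) :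
    LinearMap.range (LieAlgebra.ad ℝ (slLie n) m) ⊔
      bracketSpan (LinearMap.range (LieAlgebra.ad ℝ (slLie n) m))
        (LinearMap.range (LieAlgebra.ad ℝ (slLie n) m)) = ⊤ := by
  set R := LinearMap.range (LieAlgebra.ad ℝ (slLie n) m)
  have to_pivot {i : Fin n} (hi : i ≠ p) : pivotSingle p i p ∈ R :=
    (LieAlgebra.ad ℝ (slLie n) m).mem_range_of_apply_eq_smul (sub_ne_zero.2 (hp i hi))
      (ad_pivotSingle hm p i p)
  have from_pivot {j : Fin n} (hj : j ≠ p) : pivotSingle p p j ∈ R :=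
    (LieAlgebra.ad ℝ (slLie n) m).mem_range_of_apply_eq_smul (sub_ne_zero.2 (hp j hj).symm)
      (ad_pivotSingle hm p p j)
  refine eq_top_of_pivotSingle_mem p fun i j => ?_
  by_cases hi : i = p <;> by_cases hj : j = p
  · rw [hi, hj, show pivotSingle p p p = 0 from Subtype.ext (Matrix.pivotSingle_self p)]
    exact zero_mem _
  · rw [hi]
    exact Submodule.mem_sup_left (from_pivot hj)
  · rw [hj]
    exact Submodule.mem_sup_left (to_pivot hi)
  · refine Submodule.mem_sup_right <|
      Submodule.subset_span ⟨_, to_pivot hi, _, from_pivot hj, ?_⟩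
    exact (Subtype.ext (lie_pivotSingle_pivot hi hj)).symm

theorem essential_of_coe_eq_diagonal (hm : (m : Matrix (Fin n) (Fin n) ℝ) = diagonal a)
    {p : Fin n} (hp : ∀ i ≠ p, a i ≠ a p) : Essential m :=
  ⟨iSup_eigenspace_ad_eq_top hm,
    top_unique <| (range_ad_sup_bracketSpan_eq_top hm hp).ge.trans
      (sup_le_sup_right le_sup_right _)⟩

end slLie

/-- In `sl(n,ℝ)`, for `1 ≤ ν ≤ n-1`, the element `e_ν = E(ν,ν) − E(ν+1,ν+1)` is
essential. -/
theorem sl_essential (n : ℕ) (ν : Fin n) (hν : (ν : ℕ) + 1 < n) :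
    Essential (⟨single ν ν (1 : ℝ) -
        single (⟨(ν : ℕ) + 1, hν⟩ : Fin n) (⟨(ν : ℕ) + 1, hν⟩ : Fin n) (1 : ℝ),
      by
        show Matrix.trace _ = 0
        rw [trace_sub, trace_single_eq_same, trace_single_eq_same, sub_self]⟩ :
      slLie n) := by
  set ν' : Fin n := ⟨(ν : ℕ) + 1, hν⟩
  have hνν' : ν' ≠ ν := Fin.ne_of_val_ne (Nat.succ_ne_self _)
  refine slLie.essential_of_coe_eq_diagonal (a := Pi.single ν 1 - Pi.single ν' 1) (p := ν)
    (show single ν ν 1 - single ν' ν' 1 = _ by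
      rw [← diagonal_single, ← diagonal_single, diagonal_sub]; rfl) fun i hi => ?_
  by_cases hi' : i = ν' <;> norm_num [hi, hi', hνν']
end

section
/- Let n ≥ 1 and consider the real symplectic Lie algebra sp(2n,ℝ) = { X ∈ M_{2n}(ℝ) : XᵀJ + JX = 0 }, where J is the standard symplectic form matrix with block form J = [[0, I_n],[−I_n, 0]], with bracket the matrix commutator. For every ν with 1 ≤ ν ≤ n, the matrix h_{νν} = E(ν,ν) − E(ν+n,ν+n) is an essential element of sp(2n,ℝ). -/
/-!
Since `J` is skew with `J * J = -1`, the map `X ↦ J * X` identifies `lieSO J` with the symmetric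
matrices, so `lieSO J` is spanned by the matrices `J * (E(a,b) + E(b,a))`. When the rows `p` and
`q` of `J` are `e_q` and `-e_p`, the element `h = J * (E(p,q) + E(q,p))` is the diagonal matrix
`E(p,p) - E(q,q) = diagonal w`, and each spanning matrix is an eigenvector of `ad h` with
eigenvalue `-(w a + w b)`; hence `ad h` is diagonalizable. A spanning matrix with nonzero
eigenvalue lies in the image of `ad h`. Those with eigenvalue zero are `h` itself and, for
`a, b ∉ {p, q}`, `[J * (E(p,a) + E(a,p)), J * (E(q,b) + E(b,q))]` minus a multiple of `h`.
For `sp(2n, ℝ)`, `h_{νν}` is `J * (E(ν,ν+n) + E(ν+n,ν))`.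
-/

open Matrix

attribute [local instance 100] LieRing.ofAssociativeRing

/-- The real Lie algebra of matrices `X` with `Xᵀ * J + J * X = 0`. -/
def lieSO {ι : Type*} [Fintype ι] [DecidableEq ι] (J : Matrix ι ι ℝ) :
    LieSubalgebra ℝ (Matrix ι ι ℝ) where
  carrier := {X | Xᵀ * J + J * X = 0}
  zero_mem' := by simp
  add_mem' := by
    intro a b ha hb
    simp only [Set.mem_setOf_eq] at ha hb ⊢
    rw [transpose_add, add_mul, mul_add, add_add_add_comm, ha, hb, add_zero]
  smul_mem' := by
    intro r X hX
    simp only [Set.mem_setOf_eq] at hX ⊢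
    rw [transpose_smul, smul_mul, Matrix.mul_smul, ← smul_add, hX, smul_zero]
  lie_mem' := by
    intro X Y hX hY
    simp only [Set.mem_setOf_eq] at hX hY ⊢
    have hX' : Xᵀ * J = -(J * X) := eq_neg_of_add_eq_zero_left hX
    have hY' : Yᵀ * J = -(J * Y) := eq_neg_of_add_eq_zero_left hY
    have h1 : Yᵀ * Xᵀ * J = J * (Y * X) := by
      rw [mul_assoc, hX', mul_neg, ← mul_assoc, hY', neg_mul, neg_neg, mul_assoc]
    have h2 : Xᵀ * Yᵀ * J = J * (X * Y) := by
      rw [mul_assoc, hY', mul_neg, ← mul_assoc, hX', neg_mul, neg_neg, mul_assoc]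
    rw [Ring.lie_def, transpose_sub, transpose_mul, transpose_mul, sub_mul, h1, h2,
      mul_sub]
    abel

/-- The symmetric "boost" matrix `E(a,b) + E(b,a)` lies in `lieSO (diagonal d)`
whenever `d a = 1` and `d b = -1`. -/
lemma boost_mem_lieSO {ι : Type*} [Fintype ι] [DecidableEq ι] (d : ι → ℝ) (a b : ι)
    (ha : d a = 1) (hb : d b = -1) :
    (Matrix.single a b (1 : ℝ) + Matrix.single b a 1) ∈ lieSO (diagonal d) := by
  have hab : a ≠ b := by intro h; rw [h, hb] at ha; norm_num at ha
  show _ᵀ * _ + _ * _ = 0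
  ext i j
  simp only [transpose_add, add_mul, mul_add, Matrix.add_apply, mul_diagonal,
    diagonal_mul, transpose_apply, Matrix.zero_apply, Matrix.single, of_apply]
  split_ifs <;> simp_all

/-- The standard symplectic form matrix `J = [[0, 1], [-1, 0]]` in block form. -/
def sympJ (n : ℕ) : Matrix (Fin n ⊕ Fin n) (Fin n ⊕ Fin n) ℝ :=
  fromBlocks 0 1 (-1) 0

lemma h_mem_sp (n : ℕ) (ν : Fin n) :
    (Matrix.single (Sum.inl ν) (Sum.inl ν) (1 : ℝ) -
      Matrix.single (Sum.inr ν) (Sum.inr ν) 1) ∈ lieSO (sympJ n) := by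
  have e : Matrix.single (Sum.inl ν) (Sum.inl ν) (1 : ℝ) -
      Matrix.single (Sum.inr ν) (Sum.inr ν) 1 =
      fromBlocks (Matrix.single ν ν 1) 0 0 (-(Matrix.single ν ν 1)) := by
    ext (i | i) (j | j) <;> simp [Matrix.single, fromBlocks]
  have hDt : (Matrix.single ν ν (1 : ℝ))ᵀ = Matrix.single ν ν 1 := by
    ext i j
    simp [Matrix.single, and_comm]
  show _ᵀ * _ + _ * _ = 0
  rw [e, sympJ, fromBlocks_transpose, fromBlocks_multiply, fromBlocks_multiply,
    fromBlocks_add]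
  simp [hDt]

namespace LieSO

variable {ι : Type*}

lemma apply_swap_eq_neg {J : Matrix ι ι ℝ} (hJt : Jᵀ = -J) (i j : ι) : J j i = -J i j := by
  rw [← transpose_apply J i j, hJt, neg_apply]

variable [DecidableEq ι]

def symmUnit (a b : ι) : Matrix ι ι ℝ :=
  single a b 1 + single b a 1

lemma symmUnit_comm (a b : ι) : symmUnit a b = symmUnit b a :=
  add_comm _ _

def pairWeight (p q : ι) : ι → ℝ :=
  Pi.single p 1 - Pi.single q 1

lemma pairWeight_add_eq_zero {p q a b : ι} (hpq : p ≠ q)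
    (h : pairWeight p q a + pairWeight p q b = 0) :
    (a = p ∧ b = q) ∨ (a = q ∧ b = p) ∨ (a ≠ p ∧ a ≠ q ∧ b ≠ p ∧ b ≠ q) := by
  simp only [pairWeight, Pi.sub_apply, Pi.single_apply] at h
  split_ifs at h <;> grind

variable [Fintype ι]

lemma sum_smul_symmUnit {S : Matrix ι ι ℝ} (hS : Sᵀ = S) :
    ∑ a, ∑ b, (S a b / 2) • symmUnit a b = S := by
  have hswap : ∑ a, ∑ b, single b a (S a b) = S := by
    rw [Finset.sum_comm]
    conv_rhs => rw [matrix_eq_sum_single S]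
    refine Finset.sum_congr rfl fun b _ => Finset.sum_congr rfl fun a _ => ?_
    rw [← transpose_apply S b a, hS]
  have hdiv : ∀ a b, (S a b / 2) • symmUnit a b =
      (1 / 2 : ℝ) • (single a b (S a b) + single b a (S a b)) := by
    intro a b
    simp only [symmUnit, smul_add, Matrix.smul_single, smul_eq_mul, mul_one]
    congr 1 <;> congr 1 <;> ring
  simp only [hdiv, ← Finset.smul_sum, Finset.sum_add_distrib, hswap,
    ← matrix_eq_sum_single]
  rw [← two_smul ℝ S, smul_smul]
  norm_num

lemma diagonal_mul_symmUnit_add (d : ι → ℝ) (a b : ι) :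
    diagonal d * symmUnit a b + symmUnit a b * diagonal d = (d a + d b) • symmUnit a b := by
  ext i j
  simp only [symmUnit, Matrix.add_apply, Matrix.mul_add, Matrix.add_mul, diagonal_mul,
    mul_diagonal, Matrix.smul_apply, single_apply, smul_eq_mul]
  split_ifs <;> grind

variable {J : Matrix ι ι ℝ}

lemma mem_lieSO_iff (hJt : Jᵀ = -J) {X : Matrix ι ι ℝ} :
    X ∈ lieSO J ↔ (J * X)ᵀ = J * X := by
  change Xᵀ * J + J * X = 0 ↔ _
  rw [transpose_mul, hJt, Matrix.mul_neg, add_eq_zero_iff_neg_eq]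

lemma mul_symmUnit_mem (hJt : Jᵀ = -J) (hJJ : J * J = -1) (a b : ι) :
    J * symmUnit a b ∈ lieSO J := by
  rw [mem_lieSO_iff hJt, ← Matrix.mul_assoc, hJJ]
  simp [symmUnit, add_comm]

lemma eq_sum_smul_mul_symmUnit (hJt : Jᵀ = -J) (hJJ : J * J = -1) {X : Matrix ι ι ℝ}
    (hX : X ∈ lieSO J) :
    X = ∑ a, ∑ b, ((-(J * X)) a b / 2) • (J * symmUnit a b) := by
  have hS : (-(J * X))ᵀ = -(J * X) := by rw [transpose_neg, (mem_lieSO_iff hJt).1 hX]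
  calc X = J * -(J * X) := by
        rw [Matrix.mul_neg, ← Matrix.mul_assoc, hJJ, neg_mul, one_mul, neg_neg]
    _ = J * ∑ a, ∑ b, ((-(J * X)) a b / 2) • symmUnit a b := by rw [sum_smul_symmUnit hS]
    _ = _ := by simp only [Matrix.mul_sum, Matrix.mul_smul]

lemma lie_diagonal_mul_symmUnit {d : ι → ℝ} (hd : diagonal d ∈ lieSO J) (a b : ι) :
    ⁅diagonal d, J * symmUnit a b⁆ = -(d a + d b) • (J * symmUnit a b) := by
  have hDJ : diagonal d * J = -(J * diagonal d) := by
    have : (diagonal d)ᵀ * J + J * diagonal d = 0 := hd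
    rw [diagonal_transpose] at this
    exact eq_neg_of_add_eq_zero_left this
  have : ⁅diagonal d, J * symmUnit a b⁆ =
      -(J * (diagonal d * symmUnit a b + symmUnit a b * diagonal d)) := by
    rw [Ring.lie_def, ← Matrix.mul_assoc, hDJ]
    noncomm_ring
  rw [this, diagonal_mul_symmUnit_add, Matrix.mul_smul, neg_smul]

lemma lie_mul_symmUnit (hJt : Jᵀ = -J) {p q a b : ι} (hpq : J p q = 1) (hpb : J p b = 0)
    (hqa : J q a = 0) :
    ⁅J * symmUnit p a, J * symmUnit q b⁆ = J * symmUnit a b + J a b • (J * symmUnit p q) := by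
  have hJ := apply_swap_eq_neg hJt
  have hinner : symmUnit p a * J * symmUnit q b - symmUnit q b * J * symmUnit p a =
      symmUnit a b + J a b • symmUnit p q := by
    simp only [symmUnit, Matrix.add_mul, Matrix.mul_add, single_mul_mul_single, one_mul,
      mul_one, hJ p q, hJ q a, hJ p b, hJ a b, hpq, hpb, hqa, neg_zero, single_zero,
      ← single_neg, smul_add, Matrix.smul_single, smul_eq_mul]
    abel
  rw [Ring.lie_def, ← Matrix.mul_smul, ← Matrix.mul_add, ← hinner]
  noncomm_ring

lemma mul_symmUnit_eq_diagonal (hJt : Jᵀ = -J) {p q : ι} (hpq : J p q = 1)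
    (hp : ∀ b, b ≠ q → J p b = 0) (hq : ∀ a, a ≠ p → J q a = 0) :
    J * symmUnit p q = diagonal (pairWeight p q) := by
  have hJ := apply_swap_eq_neg hJt
  have hcol_p : ∀ i, J i p = if i = q then -1 else 0 := fun i => by
    rw [hJ p i]; split_ifs with h
    · rw [h, hpq]
    · rw [hp i h, neg_zero]
  have hcol_q : ∀ i, J i q = if i = p then 1 else 0 := fun i => by
    rw [hJ q i]; split_ifs with h
    · rw [h, hJ, hpq, neg_neg]
    · rw [hq i h, neg_zero]
  have hmul : ∀ a b i j : ι, (J * single a b (1 : ℝ)) i j = if j = b then J i a else 0 := by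
    intro a b i j
    split_ifs with h
    · rw [h, mul_single_apply_same, mul_one]
    · exact mul_single_apply_of_ne (hbj := h) ..
  ext i j
  simp only [symmUnit, Matrix.mul_add, Matrix.add_apply, hmul, hcol_p, hcol_q, diagonal_apply,
    pairWeight, Pi.sub_apply, Pi.single_apply]
  split_ifs <;> grind

lemma eq_top_of_mul_symmUnit_mem (hJt : Jᵀ = -J) (hJJ : J * J = -1) (V : Submodule ℝ (lieSO J))
    (hV : ∀ a b, ⟨J * symmUnit a b, mul_symmUnit_mem hJt hJJ a b⟩ ∈ V) : V = ⊤ := by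
  rw [eq_top_iff]
  rintro ⟨X, hX⟩ -
  have hsum : (⟨X, hX⟩ : lieSO J) = ∑ a, ∑ b, ((-(J * X)) a b / 2) •
      (⟨J * symmUnit a b, mul_symmUnit_mem hJt hJJ a b⟩ : lieSO J) := by
    ext1
    push_cast
    exact eq_sum_smul_mul_symmUnit hJt hJJ hX
  rw [hsum]
  exact Submodule.sum_mem _ fun a _ => Submodule.sum_mem _ fun b _ => V.smul_mem _ (hV a b)

lemma mem_range_of_apply_eq_smul {M : Type*} [AddCommGroup M] [Module ℝ M] {f : M →ₗ[ℝ] M}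
    {x : M} {c : ℝ} (hc : c ≠ 0) (hx : f x = c • x) : x ∈ LinearMap.range f :=
  ⟨c⁻¹ • x, by rw [map_smul, hx, smul_smul, inv_mul_cancel₀ hc, one_smul]⟩

lemma ad_diagonal_mul_symmUnit (hJt : Jᵀ = -J) (hJJ : J * J = -1) {d : ι → ℝ}
    (hd : diagonal d ∈ lieSO J) (a b : ι) :
    LieAlgebra.ad ℝ (lieSO J) ⟨diagonal d, hd⟩ ⟨J * symmUnit a b, mul_symmUnit_mem hJt hJJ a b⟩ =
      -(d a + d b) • ⟨J * symmUnit a b, mul_symmUnit_mem hJt hJJ a b⟩ :=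
  Subtype.ext (lie_diagonal_mul_symmUnit hd a b)

theorem iSup_eigenspace_ad_diagonal_eq_top (hJt : Jᵀ = -J) (hJJ : J * J = -1) {d : ι → ℝ}
    (hd : diagonal d ∈ lieSO J) :
    (⨆ c : ℝ, (LieAlgebra.ad ℝ (lieSO J) ⟨diagonal d, hd⟩).eigenspace c) = ⊤ :=
  eq_top_of_mul_symmUnit_mem hJt hJJ _ fun a b => Submodule.mem_iSup_of_mem _
    (Module.End.mem_eigenspace_iff.2 (ad_diagonal_mul_symmUnit hJt hJJ hd a b))

theorem span_sup_range_ad_sup_bracketSpan_eq_top (hJt : Jᵀ = -J) (hJJ : J * J = -1) {p q : ι}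
    (hpq : J p q = 1) (hp : ∀ b, b ≠ q → J p b = 0) (hq : ∀ a, a ≠ p → J q a = 0) :
    letI m : lieSO J := ⟨J * symmUnit p q, mul_symmUnit_mem hJt hJJ p q⟩
    Submodule.span ℝ {m} ⊔ LinearMap.range (LieAlgebra.ad ℝ _ m) ⊔
      bracketSpan (LinearMap.range (LieAlgebra.ad ℝ _ m))
        (LinearMap.range (LieAlgebra.ad ℝ _ m)) = ⊤ := by
  set m : lieSO J := ⟨J * symmUnit p q, mul_symmUnit_mem hJt hJJ p q⟩
  set G : ι → ι → lieSO J := fun a b => ⟨J * symmUnit a b, mul_symmUnit_mem hJt hJJ a b⟩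
  set w := pairWeight p q
  have hne : p ≠ q := by
    rintro rfl
    have := apply_swap_eq_neg hJt p p
    linarith
  have hdiag := mul_symmUnit_eq_diagonal hJt hpq hp hq
  have hd : diagonal w ∈ lieSO J := hdiag ▸ m.2
  have hm : m = ⟨diagonal w, hd⟩ := Subtype.ext hdiag
  have hrange : ∀ a b, w a + w b ≠ 0 → G a b ∈ LinearMap.range (LieAlgebra.ad ℝ _ m) :=
    fun a b h => mem_range_of_apply_eq_smul (neg_ne_zero.2 h)
      (by rw [hm]; exact ad_diagonal_mul_symmUnit hJt hJJ hd a b)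
  refine eq_top_of_mul_symmUnit_mem hJt hJJ _ fun a b => ?_
  change G a b ∈ _
  rcases eq_or_ne (w a + w b) 0 with hab | hab
  · rcases pairWeight_add_eq_zero hne hab with ⟨ha, hb⟩ | ⟨ha, hb⟩ | ⟨hap, haq, hbp, hbq⟩
    · rw [ha, hb]
      exact Submodule.mem_sup_left (Submodule.mem_sup_left (Submodule.mem_span_singleton_self _))
    · have hqp : G q p = m := Subtype.ext (congrArg (J * ·) (symmUnit_comm q p))
      rw [ha, hb, hqp]
      exact Submodule.mem_sup_left (Submodule.mem_sup_left (Submodule.mem_span_singleton_self _))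
    · have hbracket : G a b = ⁅G p a, G q b⁆ - J a b • m :=
        Subtype.ext (eq_sub_of_add_eq (lie_mul_symmUnit hJt hpq (hp b hbq) (hq a hap)).symm)
      have hpa : G p a ∈ LinearMap.range (LieAlgebra.ad ℝ _ m) :=
        hrange p a (by simp [w, pairWeight, hne, hap, haq])
      have hqb : G q b ∈ LinearMap.range (LieAlgebra.ad ℝ _ m) :=
        hrange q b (by simp [w, pairWeight, hne.symm, hbp, hbq])
      rw [hbracket]
      exact sub_mem (Submodule.mem_sup_right (Submodule.subset_span ⟨_, hpa, _, hqb, rfl⟩))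
        (Submodule.mem_sup_left (Submodule.mem_sup_left
          (Submodule.smul_mem _ _ (Submodule.mem_span_singleton_self _))))
  · exact Submodule.mem_sup_left (Submodule.mem_sup_right (hrange a b hab))

theorem essential_mul_symmUnit (hJt : Jᵀ = -J) (hJJ : J * J = -1) {p q : ι}
    (hpq : J p q = 1) (hp : ∀ b, b ≠ q → J p b = 0) (hq : ∀ a, a ≠ p → J q a = 0) :
    Essential (⟨J * symmUnit p q, mul_symmUnit_mem hJt hJJ p q⟩ : lieSO J) := by
  have hd := mul_symmUnit_eq_diagonal hJt hpq hp hq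
  refine ⟨?_, span_sup_range_ad_sup_bracketSpan_eq_top hJt hJJ hpq hp hq⟩
  have hm : (⟨J * symmUnit p q, mul_symmUnit_mem hJt hJJ p q⟩ : lieSO J) =
      ⟨diagonal (pairWeight p q), hd ▸ mul_symmUnit_mem hJt hJJ p q⟩ := Subtype.ext hd
  rw [hm]
  exact iSup_eigenspace_ad_diagonal_eq_top hJt hJJ _

end LieSO

section Symplectic

open LieSO

variable {n : ℕ}

lemma sympJ_transpose : (sympJ n)ᵀ = -sympJ n := by
  simp [sympJ, fromBlocks_transpose, fromBlocks_neg]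

lemma sympJ_mul_self : sympJ n * sympJ n = -1 := by
  simp [sympJ, fromBlocks_multiply, ← fromBlocks_one, fromBlocks_neg]

lemma sympJ_inl_inr (ν : Fin n) : sympJ n (.inl ν) (.inr ν) = 1 := by
  simp [sympJ]

lemma sympJ_inl_apply_of_ne (ν : Fin n) (b : Fin n ⊕ Fin n) (hb : b ≠ .inr ν) :
    sympJ n (.inl ν) b = 0 := by
  rcases b with b | b <;> simp_all [sympJ, one_apply, eq_comm]

lemma sympJ_inr_apply_of_ne (ν : Fin n) (a : Fin n ⊕ Fin n) (ha : a ≠ .inl ν) :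
    sympJ n (.inr ν) a = 0 := by
  rcases a with a | a <;> simp_all [sympJ, one_apply, eq_comm]

lemma sympJ_mul_symmUnit (ν : Fin n) :
    sympJ n * symmUnit (.inl ν) (.inr ν) =
      single (.inl ν) (.inl ν) 1 - single (.inr ν) (.inr ν) 1 := by
  rw [mul_symmUnit_eq_diagonal sympJ_transpose (sympJ_inl_inr ν) (sympJ_inl_apply_of_ne ν)
    (sympJ_inr_apply_of_ne ν), pairWeight, ← diagonal_single, ← diagonal_single, diagonal_sub]
  rfl

end Symplectic

/-- Indices are split as `Fin n ⊕ Fin n`, so that `E(ν,ν) − E(ν+n,ν+n)` is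
`E(inl ν, inl ν) − E(inr ν, inr ν)`. -/
theorem sp_essential_general (n : ℕ) (ν : Fin n) :
    Essential
      (⟨Matrix.single (Sum.inl ν) (Sum.inl ν) (1 : ℝ) -
          Matrix.single (Sum.inr ν) (Sum.inr ν) 1, h_mem_sp n ν⟩ :
        lieSO (sympJ n)) := by
  have hm : (⟨_, h_mem_sp n ν⟩ : lieSO (sympJ n)) =
      ⟨sympJ n * LieSO.symmUnit (.inl ν) (.inr ν),
        LieSO.mul_symmUnit_mem sympJ_transpose sympJ_mul_self _ _⟩ :=
    Subtype.ext (sympJ_mul_symmUnit ν).symm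
  rw [hm]
  exact LieSO.essential_mul_symmUnit sympJ_transpose sympJ_mul_self (sympJ_inl_inr ν)
    (sympJ_inl_apply_of_ne ν) (sympJ_inr_apply_of_ne ν)

/-- In `sp(2n,ℝ)` = { X : XᵀJ + JX = 0 } (indices split as `Fin n ⊕ Fin n`, so that
`E(ν,ν) − E(ν+n,ν+n)` becomes `E(inl ν, inl ν) − E(inr ν, inr ν)`), each
`h_{νν} = E(ν,ν) − E(ν+n,ν+n)` is essential. -/
theorem sp_essential (n : ℕ) (hn : 1 ≤ n) (ν : Fin n) :
    Essential
      (⟨Matrix.single (Sum.inl ν) (Sum.inl ν) (1 : ℝ) -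
          Matrix.single (Sum.inr ν) (Sum.inr ν) 1, h_mem_sp n ν⟩ :
        lieSO (sympJ n)) :=
  sp_essential_general n ν
end

section
/- Let n ≥ 2 and let g = diag(1,−1,−1,…,−1) be the Minkowski metric matrix of size (n+1)×(n+1) (indices 0,1,…,n). Consider the Lorentz Lie algebra so(1,n) = { X ∈ M_{n+1}(ℝ) : Xᵀg + gX = 0 } with bracket the matrix commutator. For every ν with 1 ≤ ν ≤ n, the boost generator m_{0ν} = E(0,ν) + E(ν,0) is an essential element of so(1,n). -/
/-!
For a signature `d` with `dᵢ² = 1`, the matrices `G(i,j) = E(i,j) - dᵢdⱼ E(j,i)` span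
`so(diag d)` (indeed `2X = ∑ Xᵢⱼ G(i,j)`), and `[G(i,j), G(j,k)] = G(i,k)` for distinct
`i, j, k`, while `[G(a,b), G(i,j)] = 0` when `{i,j}` misses `{a,b}`. For a boost `m = G(a,b)`
(`dₐ d_b = -1`), `ad m` therefore swaps `G(a,o)` and `G(b,o)` for `o ∉ {a,b}` and kills `m` and
every `G(i,j)` with `i, j ∉ {a,b}`: the `G(a,o) ± G(b,o)` are `±1`-eigenvectors and everything
else lies in the kernel. The same relations give `G(a,o), G(b,o) ∈ [m,g]` and
`G(i,j) = [G(i,a), G(a,j)] ∈ [[m,g],[m,g]]`.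
-/

open Matrix

attribute [local instance] LieRing.ofAssociativeRing

namespace lieSO

theorem ne_of_mul_eq_neg_one {ι : Type*} {d : ι → ℝ} {a b : ι} (hab : d a * d b = -1) :
    a ≠ b := by
  rintro rfl
  linarith [mul_self_nonneg (d a)]

variable {ι : Type*} [DecidableEq ι] {d : ι → ℝ}

def genMatrix (d : ι → ℝ) (i j : ι) : Matrix ι ι ℝ :=
  single i j 1 - (d i * d j) • single j i 1

theorem genMatrix_eq_add {a b : ι} (hab : d a * d b = -1) :
    genMatrix d a b = single a b 1 + single b a 1 := by
  rw [genMatrix, hab, neg_one_smul, sub_neg_eq_add]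

variable [Fintype ι]

theorem mem_diagonal_iff {X : Matrix ι ι ℝ} :
    X ∈ lieSO (diagonal d) ↔ ∀ i j, X j i * d j + d i * X i j = 0 := by
  change Xᵀ * diagonal d + diagonal d * X = 0 ↔ _
  simp [← Matrix.ext_iff, mul_diagonal, diagonal_mul]

variable (hd : ∀ k, d k * d k = 1)
include hd

theorem genMatrix_mem (i j : ι) : genMatrix d i j ∈ lieSO (diagonal d) := by
  rw [mem_diagonal_iff]
  intro k l
  simp only [genMatrix, Matrix.sub_apply, Matrix.smul_apply, single_apply, smul_eq_mul]
  by_cases hik : i = k <;> by_cases hjl : j = l <;> by_cases hil : i = l <;>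
    by_cases hjk : j = k <;> simp_all [mul_assoc, mul_left_comm (d k)]

theorem two_smul_eq_sum_genMatrix {X : Matrix ι ι ℝ} (hX : X ∈ lieSO (diagonal d)) :
    (2 : ℝ) • X = ∑ i, ∑ j, X i j • genMatrix d i j := by
  rw [mem_diagonal_iff] at hX
  ext k l
  have hlk : X l k * (d l * d k) = -X k l := by linear_combination d k * hX l k - X k l * hd k
  simp [genMatrix, Matrix.sum_apply, single_apply, mul_sub, Finset.sum_sub_distrib, mul_ite,
    ite_and, hlk, two_mul]

def gen (i j : ι) : lieSO (diagonal d) :=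
  ⟨genMatrix d i j, genMatrix_mem hd i j⟩

theorem gen_self (i : ι) : gen hd i i = 0 :=
  Subtype.ext (by simp [gen, genMatrix, hd])

theorem gen_swap (i j : ι) : gen hd j i = -(d i * d j) • gen hd i j := by
  have h : d i * d j * (d i * d j) = 1 := by linear_combination (d j * d j) * hd i + hd j
  apply Subtype.ext
  simp [gen, genMatrix, smul_sub, h, mul_comm (d j)]

theorem lie_gen_gen_of_ne {i j k : ι} (hij : i ≠ j) (hik : i ≠ k) (hjk : j ≠ k) :
    ⁅gen hd i j, gen hd j k⁆ = gen hd i k := by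
  have h : d j * d k * (d i * d j) = d i * d k := by linear_combination (d i * d k) * hd j
  apply Subtype.ext
  simp [gen, genMatrix, Ring.lie_def, sub_mul, mul_sub, hij, hij.symm, hik, hik.symm, hjk,
    hjk.symm, h]

theorem lie_gen_gen_of_disjoint {a b i j : ι} (hia : i ≠ a) (hib : i ≠ b) (hja : j ≠ a)
    (hjb : j ≠ b) : ⁅gen hd a b, gen hd i j⁆ = 0 := by
  apply Subtype.ext
  simp [gen, genMatrix, Ring.lie_def, sub_mul, mul_sub, hia, hia.symm, hib, hib.symm, hja, hja.symm,
    hjb, hjb.symm]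

theorem lie_gen_gen_of_mul_eq_neg_one {a b o : ι} (hab : d a * d b = -1) (hoa : o ≠ a)
    (hob : o ≠ b) : ⁅gen hd a b, gen hd a o⁆ = gen hd b o := by
  rw [gen_swap hd b a, smul_lie,
    lie_gen_gen_of_ne hd (ne_of_mul_eq_neg_one hab).symm hob.symm hoa.symm, mul_comm, hab,
    neg_neg, one_smul]

theorem eq_top_of_forall_gen_mem {S : Submodule ℝ (lieSO (diagonal d))}
    (h : ∀ i j, gen hd i j ∈ S) : S = ⊤ := by
  refine eq_top_iff.2 fun X _ => ?_
  have hX : X = (2⁻¹ : ℝ) • ∑ i, ∑ j, (X : Matrix ι ι ℝ) i j • gen hd i j := by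
    apply Subtype.ext
    simp [gen, ← two_smul_eq_sum_genMatrix hd X.2]
  rw [hX]
  exact S.smul_mem _ (S.sum_mem fun i _ => S.sum_mem fun j _ => S.smul_mem _ (h i j))

theorem eq_top_of_gen_mem (a b : ι) {S : Submodule ℝ (lieSO (diagonal d))}
    (hm : gen hd a b ∈ S) (ha : ∀ o, o ≠ a → o ≠ b → gen hd a o ∈ S)
    (hb : ∀ o, o ≠ a → o ≠ b → gen hd b o ∈ S)
    (hrest : ∀ i j, i ≠ a → i ≠ b → j ≠ a → j ≠ b → i ≠ j → gen hd i j ∈ S) : S = ⊤ := by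
  have swap {i j : ι} (h : gen hd i j ∈ S) : gen hd j i ∈ S :=
    gen_swap hd i j ▸ S.smul_mem _ h
  have from_ab {i j : ι} (hij : i ≠ j) (hi : i = a ∨ i = b) : gen hd i j ∈ S := by
    rcases hi with rfl | rfl
    · by_cases hjb : j = b
      · exact hjb ▸ hm
      · exact ha j (Ne.symm hij) hjb
    · by_cases hja : j = a
      · exact hja ▸ swap hm
      · exact hb j hja (Ne.symm hij)
  refine eq_top_of_forall_gen_mem hd fun i j => ?_
  by_cases hij : i = j
  · exact hij ▸ gen_self hd i ▸ S.zero_mem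
  by_cases hi : i = a ∨ i = b
  · exact from_ab hij hi
  by_cases hj : j = a ∨ j = b
  · exact swap (from_ab (Ne.symm hij) hj)
  push Not at hi hj
  exact hrest i j hi.1 hi.2 hj.1 hj.2 hij

variable {a b : ι} (hab : d a * d b = -1)
include hab

theorem iSup_eigenspace_ad_gen_eq_top :
    ⨆ c : ℝ, (LieAlgebra.ad ℝ _ (gen hd a b)).eigenspace c = ⊤ := by
  set f := LieAlgebra.ad ℝ _ (gen hd a b)
  have mem_of_eq (c : ℝ) {x} (h : f x = c • x) : x ∈ ⨆ c : ℝ, f.eigenspace c :=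
    Submodule.mem_iSup_of_mem c (Module.End.mem_eigenspace_iff.2 h)
  have hf {o} (hoa : o ≠ a) (hob : o ≠ b) :
      f (gen hd a o) = gen hd b o ∧ f (gen hd b o) = gen hd a o :=
    ⟨lie_gen_gen_of_mul_eq_neg_one hd hab hoa hob,
      lie_gen_gen_of_ne hd (ne_of_mul_eq_neg_one hab) hoa.symm hob.symm⟩
  have hplus {o} (hoa : o ≠ a) (hob : o ≠ b) :
      gen hd a o + gen hd b o ∈ ⨆ c : ℝ, f.eigenspace c :=
    mem_of_eq 1 (by rw [map_add, (hf hoa hob).1, (hf hoa hob).2, one_smul, add_comm])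
  have hminus {o} (hoa : o ≠ a) (hob : o ≠ b) :
      gen hd a o - gen hd b o ∈ ⨆ c : ℝ, f.eigenspace c :=
    mem_of_eq (-1) (by rw [map_sub, (hf hoa hob).1, (hf hoa hob).2, neg_one_smul, neg_sub])
  refine eq_top_of_gen_mem hd a b ?_ (fun o hoa hob => ?_) (fun o hoa hob => ?_)
    (fun i j hia hib hja hjb _ => ?_)
  · exact mem_of_eq 0 (by simp [f])
  · have : gen hd a o =
        (2⁻¹ : ℝ) • ((gen hd a o + gen hd b o) + (gen hd a o - gen hd b o)) := by
      module
    exact this ▸ Submodule.smul_mem _ _ (add_mem (hplus hoa hob) (hminus hoa hob))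
  · have : gen hd b o =
        (2⁻¹ : ℝ) • ((gen hd a o + gen hd b o) - (gen hd a o - gen hd b o)) := by
      module
    exact this ▸ Submodule.smul_mem _ _ (sub_mem (hplus hoa hob) (hminus hoa hob))
  · exact mem_of_eq 0 (by simp [f, lie_gen_gen_of_disjoint hd hia hib hja hjb])

theorem span_sup_range_sup_bracketSpan_eq_top :
    Submodule.span ℝ {gen hd a b} ⊔ LinearMap.range (LieAlgebra.ad ℝ _ (gen hd a b)) ⊔
      bracketSpan (LinearMap.range (LieAlgebra.ad ℝ _ (gen hd a b)))
        (LinearMap.range (LieAlgebra.ad ℝ _ (gen hd a b))) = ⊤ := by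
  set R := LinearMap.range (LieAlgebra.ad ℝ _ (gen hd a b))
  have hbo {o} (hoa : o ≠ a) (hob : o ≠ b) : gen hd b o ∈ R :=
    ⟨gen hd a o, lie_gen_gen_of_mul_eq_neg_one hd hab hoa hob⟩
  have hao {o} (hoa : o ≠ a) (hob : o ≠ b) : gen hd a o ∈ R :=
    ⟨gen hd b o, lie_gen_gen_of_ne hd (ne_of_mul_eq_neg_one hab) hoa.symm hob.symm⟩
  refine eq_top_of_gen_mem hd a b
    (Submodule.mem_sup_left (Submodule.mem_sup_left (Submodule.mem_span_singleton_self _)))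
    (fun o hoa hob => Submodule.mem_sup_left (Submodule.mem_sup_right (hao hoa hob)))
    (fun o hoa hob => Submodule.mem_sup_left (Submodule.mem_sup_right (hbo hoa hob)))
    (fun i j hia hib hja hjb hij => Submodule.mem_sup_right ?_)
  have hia' : gen hd i a ∈ R := gen_swap hd a i ▸ R.smul_mem _ (hao hia hib)
  exact lie_gen_gen_of_ne hd hia hij hja.symm ▸
    Submodule.subset_span ⟨_, hia', _, hao hja hjb, rfl⟩

theorem essential_gen : Essential (gen hd a b) :=
  ⟨iSup_eigenspace_ad_gen_eq_top hd hab, span_sup_range_sup_bracketSpan_eq_top hd hab⟩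

end lieSO

/-- In `so(1,n)` (with metric `g = diag(1,-1,…,-1)`, indices `0,…,n`), each boost
generator `m_{0ν} = E(0,ν) + E(ν,0)` with `1 ≤ ν ≤ n` is essential. -/
theorem so_one_n_boost_essential (n : ℕ) (ν : Fin (n + 1)) (hν : ν ≠ 0) :
    Essential
      (⟨Matrix.single (0 : Fin (n + 1)) ν (1 : ℝ) + Matrix.single ν (0 : Fin (n + 1)) 1,
          boost_mem_lieSO (fun i => if i = 0 then (1 : ℝ) else -1) 0 ν (by simp)
            (by simp [hν])⟩ :
        lieSO (diagonal fun i : Fin (n + 1) => if i = 0 then (1 : ℝ) else -1)) := by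
  let d : Fin (n + 1) → ℝ := fun i => if i = 0 then 1 else -1
  have hd : ∀ k, d k * d k = 1 := fun k => by by_cases hk : k = 0 <;> simp [d, hk]
  have h0ν : d 0 * d ν = -1 := by simp [d, hν]
  convert lieSO.essential_gen hd h0ν using 1
  exact Subtype.ext (lieSO.genMatrix_eq_add h0ν).symm
end

section
/- Let p, q ≥ 1 and let g = diag(1,…,1,−1,…,−1) (p entries +1 and q entries −1). Consider the real Lie algebra so(p,q) = { X ∈ M_{p+q}(ℝ) : Xᵀg + gX = 0 } with bracket the matrix commutator. For every pair of indices μ, ν with 1 ≤ μ ≤ p and p+1 ≤ ν ≤ p+q, the boost generator E(μ,ν) + E(ν,μ) is an essential element of so(p,q). -/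
open Matrix

attribute [local instance 100] LieRing.ofAssociativeRing

/-! With `J = diagonal d`, `d i = ±1`, the algebra `so(J)` is spanned by the matrices
`A a b = E(a,b) - d a d b E(b,a)`, and the boost is `m = A μ ν`. On `so(J)` one has
`(ad m)³ = ad m`, so `ad m` is diagonalizable with eigenvalues `0, ±1`. For `k ∉ {μ, ν}`,
`ad m` exchanges `A μ k` and `A ν k`, so both lie in `[m, g]`; the remaining generators are
`m` itself and the `A k l` with `k, l ∉ {μ, ν}`, which are multiples of `[A μ k, A μ l]`
and so lie in `[[m, g], [m, g]]`. -/

theorem Module.End.iSup_eigenspace_eq_top_of_cube_eq_self {K V : Type*} [Field K]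
    [NeZero (2 : K)] [AddCommGroup V] [Module K V] (f : Module.End K V)
    (hf : ∀ v, f (f (f v)) = f v) :
    ⨆ c : K, f.eigenspace c = ⊤ := by
  refine eq_top_iff.2 fun v _ => ?_
  have hv : v = (v - f (f v)) + (2⁻¹ : K) • (f (f v) + f v) + (2⁻¹ : K) • (f (f v) - f v) := by
    match_scalars <;> field_simp <;> ring
  rw [hv]
  refine add_mem (add_mem ?_ ?_) ?_
  · exact Submodule.mem_iSup_of_mem 0 (by simp [hf])
  · exact Submodule.mem_iSup_of_mem 1 (by simp [hf, add_comm])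
  · refine Submodule.mem_iSup_of_mem (-1) ?_
    rw [Module.End.mem_eigenspace_iff, map_smul, map_sub, hf]
    module

lemma ne_of_apply_eq_neg {α : Type*} {f : α → ℝ} {a b : α} (ha : f a ≠ 0) (hb : f b = -f a) :
    a ≠ b := by
  rintro rfl
  exact ha (by linarith)

section Generators

variable {ι R : Type*} [DecidableEq ι] [CommRing R] {d : ι → R} {a b μ ν k l : ι}

def lieSOGen (d : ι → R) (a b : ι) : Matrix ι ι R :=
  single a b 1 - (d a * d b) • single b a 1

lemma lieSOGen_self (ha : d a ^ 2 = 1) : lieSOGen d a a = 0 := by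
  rw [lieSOGen, ← sq, ha, one_smul, sub_self]

lemma lieSOGen_swap (ha : d a ^ 2 = 1) (hb : d b ^ 2 = 1) :
    lieSOGen d b a = -(d a * d b) • lieSOGen d a b := by
  rw [lieSOGen, lieSOGen, smul_sub, smul_smul, neg_mul, ← sq, mul_pow, ha, hb]
  module

lemma lieSOGen_eq_of_mul_eq_neg_one (h : d a * d b = -1) :
    lieSOGen d a b = single a b 1 + single b a 1 := by
  rw [lieSOGen, h, neg_one_smul, sub_neg_eq_add]

variable [Fintype ι]

lemma single_one_mul_apply (a b i j : ι) (Y : Matrix ι ι R) :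
    (single a b (1 : R) * Y) i j = if i = a then Y b j else 0 := by
  split_ifs with h
  · rw [h, single_mul_apply_same, one_mul]
  · exact single_mul_apply_of_ne _ _ _ _ _ h _

lemma mul_single_one_apply (a b i j : ι) (Y : Matrix ι ι R) :
    (Y * single a b (1 : R)) i j = if j = b then Y i a else 0 := by
  split_ifs with h
  · rw [h, mul_single_apply_same, mul_one]
  · exact mul_single_apply_of_ne _ _ _ _ _ h _

lemma lie_boost_lie_boost_lie_boost (hμν : μ ≠ ν) (X : Matrix ι ι R) (hμ : X μ μ = 0)
    (hν : X ν ν = 0) (hX : X μ ν = X ν μ) :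
    ⁅single μ ν (1 : R) + single ν μ 1, ⁅single μ ν (1 : R) + single ν μ 1,
      ⁅single μ ν (1 : R) + single ν μ 1, X⁆⁆⁆ = ⁅single μ ν (1 : R) + single ν μ 1, X⁆ := by
  ext i j
  simp only [Ring.lie_def, Matrix.sub_apply, Matrix.add_apply, mul_sub, sub_mul, mul_add,
    add_mul, single_one_mul_apply, mul_single_one_apply]
  split_ifs <;> simp_all

lemma lie_single_add_single_lieSOGen (hμν : μ ≠ ν) (hkμ : k ≠ μ) (hkν : k ≠ ν)
    (h : d ν = -d μ) :
    ⁅single μ ν (1 : R) + single ν μ 1, lieSOGen d ν k⁆ = lieSOGen d μ k := by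
  simp [lieSOGen, Ring.lie_def, add_mul, mul_add, hμν, hμν.symm, hkμ, hkν, hkμ.symm,
    hkν.symm, h]

lemma lie_lieSOGen_lieSOGen (hk : k ≠ μ) (hl : l ≠ μ) (hdk : d k ^ 2 = 1) :
    ⁅lieSOGen d μ k, lieSOGen d μ l⁆ = -(d μ * d k) • lieSOGen d k l := by
  obtain rfl | hkl := eq_or_ne k l
  · rw [Ring.lie_def, sub_self, lieSOGen_self hdk, smul_zero]
  simp only [lieSOGen, smul_single, smul_eq_mul, mul_one, Ring.lie_def, mul_sub, sub_mul, ne_eq,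
    hk, hl, hkl, hk.symm, hl.symm, hkl.symm, not_false_eq_true, single_mul_single_of_ne,
    single_mul_single_same, zero_sub, sub_self, sub_zero, sub_neg_eq_add, neg_smul]
  rw [smul_sub, smul_single, smul_single, smul_eq_mul, smul_eq_mul, mul_one,
    show d μ * d k * (d k * d l) = d μ * d l by linear_combination d μ * d l * hdk]
  abel

end Generators

section LieSO

variable {ι : Type*} [Fintype ι] [DecidableEq ι] {d : ι → ℝ} {X : Matrix ι ι ℝ}

lemma mem_lieSO_diagonal_iff :
    X ∈ lieSO (diagonal d) ↔ ∀ i j, X j i * d j + d i * X i j = 0 := by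
  change Xᵀ * diagonal d + diagonal d * X = 0 ↔ _
  simp [← Matrix.ext_iff, mul_diagonal, diagonal_mul]

lemma lieSO_diagonal_apply_self (hX : X ∈ lieSO (diagonal d)) {i : ι} (hi : d i ≠ 0) :
    X i i = 0 := by
  have h : d i * (2 * X i i) = 0 := by linear_combination mem_lieSO_diagonal_iff.1 hX i i
  simpa [hi] using h

lemma lieSO_diagonal_apply_comm (hX : X ∈ lieSO (diagonal d)) {μ ν : ι} (hμ : d μ ≠ 0)
    (hν : d ν = -d μ) : X μ ν = X ν μ := by
  have h : d μ * (X μ ν - X ν μ) = 0 := by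
    linear_combination mem_lieSO_diagonal_iff.1 hX μ ν - X ν μ * hν
  simpa [hμ, sub_eq_zero] using h

lemma lieSOGen_mem_lieSO {a b : ι} (hb : d b ^ 2 = 1) :
    lieSOGen d a b ∈ lieSO (diagonal d) := by
  rw [mem_lieSO_diagonal_iff]
  intro i j
  simp only [lieSOGen, Matrix.sub_apply, Matrix.smul_apply, single_apply, smul_eq_mul]
  grind

lemma eq_sum_lieSOGen (hd : ∀ i, d i ^ 2 = 1) (hX : X ∈ lieSO (diagonal d)) :
    X = ∑ a, ∑ b, (X a b / 2) • lieSOGen d a b := by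
  ext i j
  have hij := mem_lieSO_diagonal_iff.1 hX i j
  simp only [lieSOGen, smul_single, smul_eq_mul, mul_one, Matrix.sum_apply, Matrix.smul_apply,
    Matrix.sub_apply, single_apply, ite_and, mul_sub, mul_ite, mul_zero, Finset.sum_sub_distrib,
    Finset.sum_ite_irrel, Finset.sum_ite_eq', Finset.mem_univ, if_true, Finset.sum_const_zero]
  linear_combination d i / 2 * hij - X i j / 2 * hd i

lemma lieSO_diagonal_eq_top_of_mk_lieSOGen_mem (hd : ∀ i, d i ^ 2 = 1)
    (S : Submodule ℝ (lieSO (diagonal d)))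
    (hS : ∀ a b, (⟨lieSOGen d a b, lieSOGen_mem_lieSO (hd b)⟩ : lieSO (diagonal d)) ∈ S) :
    S = ⊤ := by
  refine eq_top_iff.2 fun x _ => ?_
  have hx : x = ∑ a, ∑ b, ((x : Matrix ι ι ℝ) a b / 2) •
      (⟨lieSOGen d a b, lieSOGen_mem_lieSO (hd b)⟩ : lieSO (diagonal d)) :=
    Subtype.ext (by simpa using eq_sum_lieSOGen hd x.2)
  rw [hx]
  exact sum_mem fun a _ => sum_mem fun b _ => S.smul_mem _ (hS a b)

end LieSO

def essentialSpan {L : Type*} [LieRing L] [LieAlgebra ℝ L] (m : L) : Submodule ℝ L :=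
  Submodule.span ℝ {m} ⊔ LinearMap.range (LieAlgebra.ad ℝ L m) ⊔
    bracketSpan (LinearMap.range (LieAlgebra.ad ℝ L m)) (LinearMap.range (LieAlgebra.ad ℝ L m))

section Boost

variable {ι : Type*} [Fintype ι] [DecidableEq ι] {d : ι → ℝ} {μ ν : ι}
  {m : lieSO (diagonal d)}

lemma lie_lie_lie_eq_lie_of_coe_eq_boost (hμ : d μ ≠ 0) (hν : d ν = -d μ)
    (hm : (m : Matrix ι ι ℝ) = single μ ν 1 + single ν μ 1) (x : lieSO (diagonal d)) :
    ⁅m, ⁅m, ⁅m, x⁆⁆⁆ = ⁅m, x⁆ := by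
  apply Subtype.ext
  simp only [LieSubalgebra.coe_bracket, hm]
  exact lie_boost_lie_boost_lie_boost (ne_of_apply_eq_neg hμ hν) _
    (lieSO_diagonal_apply_self x.2 hμ) (lieSO_diagonal_apply_self x.2 (by simpa [hν] using hμ))
    (lieSO_diagonal_apply_comm x.2 hμ hν)

lemma mk_lieSOGen_mem_range_ad (hd : ∀ i, d i ^ 2 = 1) (hν : d ν = -d μ)
    (hm : (m : Matrix ι ι ℝ) = single μ ν 1 + single ν μ 1) {k : ι} (hkμ : k ≠ μ)
    (hkν : k ≠ ν) :
    (⟨lieSOGen d μ k, lieSOGen_mem_lieSO (hd k)⟩ : lieSO (diagonal d)) ∈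
      LinearMap.range (LieAlgebra.ad ℝ _ m) := by
  have hμ : d μ ≠ 0 := fun h => by simpa [h] using hd μ
  refine ⟨⟨lieSOGen d ν k, lieSOGen_mem_lieSO (hd k)⟩, Subtype.ext ?_⟩
  rw [LieAlgebra.ad_apply, LieSubalgebra.coe_bracket, hm]
  exact lie_single_add_single_lieSOGen (ne_of_apply_eq_neg hμ hν) hkμ hkν hν

lemma mk_lieSOGen_mem_essentialSpan (hd : ∀ i, d i ^ 2 = 1) (hν : d ν = -d μ)
    (hm : (m : Matrix ι ι ℝ) = single μ ν 1 + single ν μ 1) (k : ι) :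
    (⟨lieSOGen d μ k, lieSOGen_mem_lieSO (hd k)⟩ : lieSO (diagonal d)) ∈ essentialSpan m := by
  by_cases hkμ : k = μ
  · subst hkμ
    convert zero_mem (essentialSpan m) using 1
    exact Subtype.ext (lieSOGen_self (hd k))
  by_cases hkν : k = ν
  · subst hkν
    have hk : (⟨lieSOGen d μ k, lieSOGen_mem_lieSO (hd k)⟩ : lieSO (diagonal d)) = m := by
      refine Subtype.ext ((lieSOGen_eq_of_mul_eq_neg_one ?_).trans hm.symm)
      linear_combination hν * d μ - hd μ
    rw [hk]
    exact Submodule.mem_sup_left (Submodule.mem_sup_left (Submodule.mem_span_singleton_self m))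
  exact Submodule.mem_sup_left (Submodule.mem_sup_right (mk_lieSOGen_mem_range_ad hd hν hm hkμ hkν))

lemma essentialSpan_eq_top_of_coe_eq_boost (hd : ∀ i, d i ^ 2 = 1) (hν : d ν = -d μ)
    (hm : (m : Matrix ι ι ℝ) = single μ ν 1 + single ν μ 1) : essentialSpan m = ⊤ := by
  let A (a b : ι) : lieSO (diagonal d) := ⟨lieSOGen d a b, lieSOGen_mem_lieSO (hd b)⟩
  have hpair : ∀ a b, a = μ ∨ a = ν → A a b ∈ essentialSpan m := by
    rintro a b (rfl | rfl)
    · exact mk_lieSOGen_mem_essentialSpan hd hν hm b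
    · exact mk_lieSOGen_mem_essentialSpan hd (by linarith) (hm.trans (add_comm _ _)) b
  refine lieSO_diagonal_eq_top_of_mk_lieSOGen_mem hd _ fun a b => ?_
  change A a b ∈ essentialSpan m
  by_cases ha : a = μ ∨ a = ν
  · exact hpair a b ha
  by_cases hb : b = μ ∨ b = ν
  · have hswap : A a b = -(d b * d a) • A b a := Subtype.ext (lieSOGen_swap (hd b) (hd a))
    rw [hswap]
    exact Submodule.smul_mem _ _ (hpair b a hb)
  rw [not_or] at ha hb
  have hlie : A a b = -(d μ * d a) • ⁅A μ a, A μ b⁆ := by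
    refine Subtype.ext ?_
    change lieSOGen d a b = -(d μ * d a) • ⁅lieSOGen d μ a, lieSOGen d μ b⁆
    rw [lie_lieSOGen_lieSOGen ha.1 hb.1 (hd a), smul_smul, neg_mul_neg, ← sq, mul_pow, hd, hd,
      one_mul, one_smul]
  rw [hlie]
  refine Submodule.smul_mem _ _ (Submodule.mem_sup_right (Submodule.subset_span ?_))
  exact ⟨_, mk_lieSOGen_mem_range_ad hd hν hm ha.1 ha.2,
    _, mk_lieSOGen_mem_range_ad hd hν hm hb.1 hb.2, rfl⟩

end Boost

/-- In `so(p,q)` (with metric `g = diag(1,…,1,-1,…,-1)`, `p` entries `+1` and `q`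
entries `-1`), each boost generator `E(μ,ν) + E(ν,μ)` with `μ` in the first `p` indices
and `ν` in the last `q` indices is essential. -/
theorem so_p_q_boost_essential (p q : ℕ)
    (μ ν : Fin (p + q)) (hμ : (μ : ℕ) < p) (hν : p ≤ (ν : ℕ)) :
    Essential
      (⟨Matrix.single μ ν (1 : ℝ) + Matrix.single ν μ 1,
          boost_mem_lieSO (fun i : Fin (p + q) => if (i : ℕ) < p then (1 : ℝ) else -1) μ ν
            (by simp [hμ]) (by simp [Nat.not_lt.mpr hν])⟩ :
        lieSO (diagonal fun i : Fin (p + q) => if (i : ℕ) < p then (1 : ℝ) else -1)) := by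
  have hd : ∀ i : Fin (p + q), (if (i : ℕ) < p then (1 : ℝ) else -1) ^ 2 = 1 := fun i => by
    split_ifs <;> norm_num
  have hνμ : (if (ν : ℕ) < p then (1 : ℝ) else -1) = -(if (μ : ℕ) < p then (1 : ℝ) else -1) := by
    simp [hμ, Nat.not_lt.mpr hν]
  refine ⟨Module.End.iSup_eigenspace_eq_top_of_cube_eq_self _ fun x => ?_,
    essentialSpan_eq_top_of_coe_eq_boost hd hνμ rfl⟩
  exact lie_lie_lie_eq_lie_of_coe_eq_boost (by simp [hμ]) hνμ rfl x
end
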